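/- arXiv:2405.17948 — 4 statements merged into one kernel-verified Lean document; each statement's English description precedes it below -/
import Mathlib

section
/- Let C be a dendritic face complex. Then the restriction of <⁺ to the set C₀ of 0-dimensional faces is a strict linear order: for all distinct x, y ∈ C₀, either x <⁺ y or y <⁺ x. -/
/-- The signed codimension-1 face relation: `true` stands for `≺⁺`, `false` for `≺⁻`. -/
def sprec {α : Type*} (precN precP : α → α → Prop) : Bool → α → α → Prop
  | true => precP
  | false => precN

/-- A dendritic face complex (DFC) on a finite type `α` of faces: a positive-to-one
poset (graded by `dim`, with source relation `precN` = `≺⁻`, target relation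
`precP` = `≺⁺`, and target map `tgt` = `γ`) together with a greatest element `top` = `ω`,
oriented thinness (`thin`), and acyclicity (`src_singleton`, `src_exists`, `no_cycle`). -/
structure DFC (α : Type*) [Fintype α] where
  dim : α → ℕ
  precN : α → α → Prop
  precP : α → α → Prop
  tgt : α → α
  dim_precN : ∀ {y x}, precN y x → dim x = dim y + 1
  dim_precP : ∀ {y x}, precP y x → dim x = dim y + 1
  not_both : ∀ y x, ¬ (precN y x ∧ precP y x)
  tgt_precP : ∀ x, 1 ≤ dim x → precP (tgt x) x
  precP_unique : ∀ {y x}, precP y x → y = tgt x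
  src_exists : ∀ x, 1 ≤ dim x → ∃ y, precN y x
  top : α
  le_top : ∀ x, Relation.ReflTransGen (fun a b => precN a b ∨ precP a b) x top
  thin : ∀ (a b : Bool) (x y z : α), sprec precN precP b z y → sprec precN precP a y x →
    ∃! y', y' ≠ y ∧ ∃ a' b', sprec precN precP b' z y' ∧ sprec precN precP a' y' x ∧
      ((a = b) ↔ ¬ (a' = b'))
  src_singleton : ∀ x, dim x = 1 → ∃! y, precN y x
  no_cycle : ∀ (x : α) (p : ℕ), 1 ≤ p → ∀ y : ℕ → α,
    (∀ i, 1 ≤ i → i ≤ p → precN (y i) x) → y (p + 1) = y 1 →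
    ¬ (∀ i, 1 ≤ i → i ≤ p → precN (tgt (y (i + 1))) (y i))

namespace DFC

variable {α : Type*} [Fintype α]

/-- `x ◁ y` : there is `t` with `x ≺⁻ t` and `y ≺⁺ t`. -/
def tri (D : DFC α) (x y : α) : Prop := ∃ t, D.precN x t ∧ D.precP y t

/-- `<⁺` : the transitive closure of `◁`. -/
def ltP (D : DFC α) : α → α → Prop := Relation.TransGen D.tri

/-- The iterated target `γ^{(k)}ω ∈ C_k` (for `k ≤ n = dim ω`). -/
def itTgt (D : DFC α) (k : ℕ) : α := D.tgt^[D.dim D.top - k] D.top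

/-- Membership in `Λ_k` : a `k`-dimensional face that is the target of no face. -/
def lam (D : DFC α) (k : ℕ) (x : α) : Prop := D.dim x = k ∧ ∀ c, ¬ D.precP x c

/-- A (possibly trivial) lower path from `c` to `c'` inside `δ(b)`, all of whose
lower witnesses `dᵢ` have `e` as a `≺^β`-face: `c = c₀ ≻⁻ d₀ ≺⁺ c₁ ≻⁻ d₁ ≺⁺ ⋯ ≺⁺ c_p = c'`. -/
def lowerPath (D : DFC α) (β : Bool) (b e c c' : α) : Prop :=
  ∃ (p : ℕ) (cs ds : ℕ → α), cs 0 = c ∧ cs p = c' ∧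
    (∀ i ≤ p, D.precN (cs i) b) ∧
    ∀ i < p, D.precN (ds i) (cs i) ∧ D.precP (ds i) (cs (i + 1)) ∧
      sprec D.precN D.precP β e (ds i)

/-- A non-trivial simple `δ(b)`-zig-zag from `c` to `c'`: first `r` ascending steps
`cᵢ ≻⁺ dᵢ ≺⁻ c_{i+1}` with `e ≺^β dᵢ`, then `p − r` descending steps
`cᵢ ≻⁻ dᵢ ≺⁺ c_{i+1}` with `e ≺^{−β} dᵢ`, with pairwise distinct `dᵢ`. -/
def zigzag (D : DFC α) (β : Bool) (b e c c' : α) : Prop :=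
  ∃ (p r : ℕ), 1 ≤ p ∧ r ≤ p ∧ ∃ cs ds : ℕ → α,
    cs 0 = c ∧ cs p = c' ∧ (∀ i ≤ p, D.precN (cs i) b) ∧
    (∀ i j, i < p → j < p → i ≠ j → ds i ≠ ds j) ∧
    (∀ i < r, D.precP (ds i) (cs i) ∧ D.precN (ds i) (cs (i + 1)) ∧
      sprec D.precN D.precP β e (ds i)) ∧
    (∀ i, r ≤ i → i < p → D.precN (ds i) (cs i) ∧ D.precP (ds i) (cs (i + 1)) ∧
      sprec D.precN D.precP (!β) e (ds i))

end DFC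

namespace DFC

variable {α : Type*} [Fintype α] (D : DFC α)

/-- auxiliary: the covering relation `≺`. -/
def prec (a b : α) : Prop := D.precN a b ∨ D.precP a b

/-- auxiliary: the face order `≤`. -/
def dle (a b : α) : Prop := Relation.ReflTransGen (fun a b => D.precN a b ∨ D.precP a b) a b

/-- auxiliary: 0-faces of `y`. -/
def Vs (y u : α) : Prop := D.dim u = 0 ∧ D.dle u y

/-- auxiliary: 1-faces of `y`. -/
def Es (y e : α) : Prop := D.dim e = 1 ∧ D.dle e y

variable {D}

lemma dim_prec {a b : α} (h : D.prec a b) : D.dim b = D.dim a + 1 := by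
  cases h with
  | inl h => exact D.dim_precN h
  | inr h => exact D.dim_precP h

lemma dle_refl (a : α) : D.dle a a := Relation.ReflTransGen.refl

lemma dle_of_prec {a b : α} (h : D.prec a b) : D.dle a b :=
  Relation.ReflTransGen.single h

lemma dle_trans {a b c : α} (h : D.dle a b) (h' : D.dle b c) : D.dle a c :=
  Relation.ReflTransGen.trans h h'

lemma dle_dim {a b : α} (h : D.dle a b) : D.dim a ≤ D.dim b := by
  induction h with
  | refl => exact le_refl _
  | tail h' hstep ih => have := dim_prec hstep; omega

lemma dle_eq_of_dim {a b : α} (h : D.dle a b) (hd : D.dim b ≤ D.dim a) : a = b := by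
  cases (Relation.ReflTransGen.cases_tail h) with
  | inl h' => exact h'.symm
  | inr h' =>
    obtain ⟨c, hac, hcb⟩ := h'
    have h1 := dle_dim hac
    have h2 := dim_prec hcb
    omega

lemma dle_dest {a b : α} (h : D.dle a b) (hne : a ≠ b) :
    ∃ w, D.dle a w ∧ D.prec w b := by
  cases (Relation.ReflTransGen.cases_tail h) with
  | inl h' => exact absurd h'.symm hne
  | inr h' => exact h'

lemma prec_of_dle_succ {a b : α} (h : D.dle a b) (hd : D.dim b = D.dim a + 1) :
    D.prec a b := by
  have hne : a ≠ b := by intro he; subst he; omega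
  obtain ⟨w, haw, hwb⟩ := dle_dest h hne
  have h1 := dim_prec hwb
  have := dle_eq_of_dim haw (by have := dle_dim haw; omega)
  subst this; exact hwb

lemma tgt_eq {a b : α} (h : D.precP a b) : a = D.tgt b := D.precP_unique h

lemma notNP {a b : α} (h : D.precN a b) (h' : D.precP a b) : False :=
  D.not_both a b ⟨h, h'⟩

end DFC
namespace DFC

variable {α : Type*} [Fintype α] {D : DFC α}

/-- thinness at a chain `z ≺⁻ c ≺⁻ y`. -/
lemma TL1 {y c z : α} (hzc : D.precN z c) (hcy : D.precN c y) :
    ∃! w, (D.precP z w ∧ D.precN w y) ∨ (D.precN z w ∧ D.precP w y) := by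
  have h := D.thin false false y c z hzc hcy
  have hiff : ∀ u, ((u ≠ c ∧ ∃ a' b', sprec D.precN D.precP b' z u ∧
      sprec D.precN D.precP a' u y ∧ ((false = false) ↔ ¬ (a' = b')))) ↔
      ((D.precP z u ∧ D.precN u y) ∨ (D.precN z u ∧ D.precP u y)) := by
    intro u
    constructor
    · rintro ⟨hne, a', b', hb', ha', hsgn⟩
      have hne' : a' ≠ b' := by simpa using hsgn
      cases a' <;> cases b' <;> simp_all [sprec]
    · rintro (⟨h1, h2⟩ | ⟨h1, h2⟩)
      · refine ⟨?_, false, true, h1, h2, by simp⟩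
        intro he; subst he; exact notNP hzc h1
      · refine ⟨?_, true, false, h1, h2, by simp⟩
        intro he; subst he; exact notNP hcy h2
  exact (existsUnique_congr hiff).mp h

/-- thinness at a chain `z ≺⁺ c ≺⁻ y` (`z = tgt c`). -/
lemma TL2 {y c z : α} (hzc : D.precP z c) (hcy : D.precN c y) :
    ∃! w, (D.precN z w ∧ D.precN w y) ∨ (D.precP z w ∧ D.precP w y) := by
  have h := D.thin false true y c z hzc hcy
  have hiff : ∀ u, ((u ≠ c ∧ ∃ a' b', sprec D.precN D.precP b' z u ∧
      sprec D.precN D.precP a' u y ∧ ((false = true) ↔ ¬ (a' = b')))) ↔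
      ((D.precN z u ∧ D.precN u y) ∨ (D.precP z u ∧ D.precP u y)) := by
    intro u
    constructor
    · rintro ⟨hne, a', b', hb', ha', hsgn⟩
      have hne' : a' = b' := by simpa using hsgn
      cases a' <;> cases b' <;> simp_all [sprec]
    · rintro (⟨h1, h2⟩ | ⟨h1, h2⟩)
      · refine ⟨?_, false, false, h1, h2, by simp⟩
        intro he; subst he; exact notNP h1 hzc
      · refine ⟨?_, true, true, h1, h2, by simp⟩
        intro he; subst he; exact notNP hcy h2
  exact (existsUnique_congr hiff).mp h

/-- thinness at a chain `z ≺⁺ c ≺⁺ y` (`c = tgt y`, `z = tgt c`). -/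
lemma TL3 {y c z : α} (hzc : D.precP z c) (hcy : D.precP c y) :
    ∃! w, (D.precP z w ∧ D.precN w y) ∨ (D.precN z w ∧ D.precP w y) := by
  have h := D.thin true true y c z hzc hcy
  have hiff : ∀ u, ((u ≠ c ∧ ∃ a' b', sprec D.precN D.precP b' z u ∧
      sprec D.precN D.precP a' u y ∧ ((true = true) ↔ ¬ (a' = b')))) ↔
      ((D.precP z u ∧ D.precN u y) ∨ (D.precN z u ∧ D.precP u y)) := by
    intro u
    constructor
    · rintro ⟨hne, a', b', hb', ha', hsgn⟩
      have hne' : a' ≠ b' := by simpa using hsgn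
      cases a' <;> cases b' <;> simp_all [sprec]
    · rintro (⟨h1, h2⟩ | ⟨h1, h2⟩)
      · refine ⟨?_, false, true, h1, h2, by simp⟩
        intro he; subst he; exact notNP h2 hcy
      · refine ⟨?_, true, false, h1, h2, by simp⟩
        intro he; subst he; exact notNP h1 hzc
  exact (existsUnique_congr hiff).mp h

/-- thinness at a chain `z ≺⁻ c ≺⁺ y` (`c = tgt y`). -/
lemma TL4 {y c z : α} (hzc : D.precN z c) (hcy : D.precP c y) :
    ∃! w, (D.precN z w ∧ D.precN w y) ∨ (D.precP z w ∧ D.precP w y) := by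
  have h := D.thin true false y c z hzc hcy
  have hiff : ∀ u, ((u ≠ c ∧ ∃ a' b', sprec D.precN D.precP b' z u ∧
      sprec D.precN D.precP a' u y ∧ ((true = false) ↔ ¬ (a' = b')))) ↔
      ((D.precN z u ∧ D.precN u y) ∨ (D.precP z u ∧ D.precP u y)) := by
    intro u
    constructor
    · rintro ⟨hne, a', b', hb', ha', hsgn⟩
      have hne' : a' = b' := by simpa using hsgn
      cases a' <;> cases b' <;> simp_all [sprec]
    · rintro (⟨h1, h2⟩ | ⟨h1, h2⟩)
      · refine ⟨?_, false, false, h1, h2, by simp⟩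
        intro he; subst he; exact notNP h2 hcy
      · refine ⟨?_, true, true, h1, h2, by simp⟩
        intro he; subst he; exact notNP hzc h1
  exact (existsUnique_congr hiff).mp h

end DFC
namespace DFC

variable {α : Type*} [Fintype α] {D : DFC α}

omit [Fintype α] in
lemma transGen_to_seq {r : α → α → Prop} {a b : α} (h : Relation.TransGen r a b) :
    ∃ (p : ℕ) (f : ℕ → α), 1 ≤ p ∧ f 0 = a ∧ f p = b ∧ ∀ i < p, r (f i) (f (i+1)) := by
  induction h with
  | @single b hstep =>
    refine ⟨1, fun i => if i = 0 then a else b, le_refl 1, by simp, by simp, ?_⟩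
    intro i hi
    have : i = 0 := by omega
    subst this; simpa using hstep
  | @tail b' c hab hstep ih =>
    obtain ⟨p, f, hp, h0, hpb, hsteps⟩ := ih
    refine ⟨p+1, fun i => if i ≤ p then f i else c, by omega, ?_, by simp, ?_⟩
    · simpa using h0
    · intro i hi
      rcases Nat.lt_or_ge i p with h' | h'
      · simpa [Nat.le_of_lt h', Nat.succ_le_of_lt h'] using hsteps i h'
      · have : i = p := by omega
        subst this
        simpa [hpb] using hstep

/-- no cycles for the "child" relation on the sources of `x`. -/
lemma irrefl_child (x : α) :
    ∀ a, ¬ Relation.TransGen (fun b' b => D.precN b' x ∧ D.precN b x ∧ D.precN (D.tgt b') b) a a := by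
  set r := fun b' b => D.precN b' x ∧ D.precN b x ∧ D.precN (D.tgt b') b with hr
  intro a ha
  obtain ⟨p, f, hp, h0, hpb, hsteps⟩ := transGen_to_seq ha
  refine D.no_cycle x p hp (fun j => f (p + 1 - j)) ?_ ?_ ?_
  · intro i hi1 hip
    show D.precN (f (p + 1 - i)) x
    rcases Nat.lt_or_ge (p + 1 - i) p with h' | h'
    · exact (hsteps _ h').1
    · have he : p + 1 - i = p := by omega
      rw [he, hpb, ← h0]
      exact (hsteps 0 (by omega)).1
  · show f (p + 1 - (p + 1)) = f (p + 1 - 1)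
    rw [show p + 1 - (p+1) = 0 by omega, show p + 1 - 1 = p by omega, h0, hpb]
  · intro i hi1 hip
    show D.precN (D.tgt (f (p + 1 - (i+1)))) (f (p + 1 - i))
    have h1 : p + 1 - i = (p - i) + 1 := by omega
    have h2 : p + 1 - (i+1) = p - i := by omega
    rw [h1, h2]
    exact (hsteps (p - i) (by omega)).2.2

/-- the "child" relation on the sources of `x` is well-founded. -/
lemma wf_child (x : α) :
    WellFounded (fun b' b => D.precN b' x ∧ D.precN b x ∧ D.precN (D.tgt b') b) := by
  set r := fun b' b => D.precN b' x ∧ D.precN b x ∧ D.precN (D.tgt b') b with hr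
  have hwf : WellFounded (Relation.TransGen r) := by
    have : IsTrans α (Relation.TransGen r) := ⟨fun _ _ _ h h' => h.trans h'⟩
    have : IsIrrefl α (Relation.TransGen r) := ⟨irrefl_child x⟩
    exact Finite.wellFounded_of_trans_of_irrefl _
  exact Subrelation.wf (fun h => Relation.TransGen.single h) hwf

/-- no cycles for the "parent" relation on the sources of `x`. -/
lemma irrefl_parent (x : α) :
    ∀ a, ¬ Relation.TransGen (fun c b => D.precN c x ∧ D.precN b x ∧ D.precN (D.tgt b) c) a a := by
  set r := fun c b => D.precN c x ∧ D.precN b x ∧ D.precN (D.tgt b) c with hr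
  intro a ha
  obtain ⟨p, f, hp, h0, hpb, hsteps⟩ := transGen_to_seq ha
  refine D.no_cycle x p hp (fun j => f (j - 1)) ?_ ?_ ?_
  · intro i hi1 hip
    show D.precN (f (i - 1)) x
    rcases Nat.lt_or_ge (i - 1) p with h' | h'
    · exact (hsteps _ h').1
    · have he : i - 1 = p := by omega
      rw [he, hpb, ← h0]
      exact (hsteps 0 (by omega)).1
  · show f (p + 1 - 1) = f (1 - 1)
    rw [show p + 1 - 1 = p by omega, show 1 - 1 = 0 by omega, h0, hpb]
  · intro i hi1 hip
    show D.precN (D.tgt (f ((i+1) - 1))) (f (i - 1))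
    have h1 : (i + 1) - 1 = (i - 1) + 1 := by omega
    rw [h1]
    exact (hsteps (i - 1) (by omega)).2.2

/-- the "parent" relation on the sources of `x` is well-founded. -/
lemma wf_parent (x : α) :
    WellFounded (fun c b => D.precN c x ∧ D.precN b x ∧ D.precN (D.tgt b) c) := by
  set r := fun c b => D.precN c x ∧ D.precN b x ∧ D.precN (D.tgt b) c with hr
  have hwf : WellFounded (Relation.TransGen r) := by
    have : IsTrans α (Relation.TransGen r) := ⟨fun _ _ _ h h' => h.trans h'⟩
    have : IsIrrefl α (Relation.TransGen r) := ⟨irrefl_parent x⟩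
    exact Finite.wellFounded_of_trans_of_irrefl _
  exact Subrelation.wf (fun h => Relation.TransGen.single h) hwf

end DFC
namespace DFC

variable {α : Type*} [Fintype α] {D : DFC α}

/-- `v (0..k)` embeds monotonically into `w (0..q)`. -/
def embp (v : ℕ → α) (k : ℕ) (w : ℕ → α) (q : ℕ) : Prop :=
  (∀ i, i ≤ k → ∃ p, p ≤ q ∧ w p = v i) ∧
  (∀ i j p p', i ≤ k → j ≤ k → i < j → p ≤ q → p' ≤ q → w p = v i → w p' = v j → p < p')

omit [Fintype α] in
lemma embp_refl {w : ℕ → α} {q : ℕ}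
    (hinj : ∀ i j, i ≤ q → j ≤ q → w i = w j → i = j) : embp w q w q := by
  constructor
  · exact fun i hi => ⟨i, hi, rfl⟩
  · intro i j p p' hi hj hij hp hp' he he'
    rw [hinj p i hp hi he, hinj p' j hp' hj he']
    exact hij

omit [Fintype α] in
lemma embp_trans {v : ℕ → α} {k : ℕ} {w : ℕ → α} {q : ℕ} {u : ℕ → α} {r : ℕ}
    (h1 : embp v k w q) (h2 : embp w q u r) : embp v k u r := by
  constructor
  · intro i hi
    obtain ⟨p, hp, he⟩ := h1.1 i hi
    obtain ⟨s, hs, he'⟩ := h2.1 p hp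
    exact ⟨s, hs, by rw [he', he]⟩
  · intro i j s s' hi hj hij hs hs' he he'
    obtain ⟨p, hp, hep⟩ := h1.1 i hi
    obtain ⟨p', hp', hep'⟩ := h1.1 j hj
    have hpp' : p < p' := h1.2 i j p p' hi hj hij hp hp' hep hep'
    exact h2.2 p p' s s' hp hp' hpp' hs hs' (by rw [he, ← hep]) (by rw [he', ← hep'])

omit [Fintype α] in
lemma embp_of_fwd {v : ℕ → α} {k : ℕ} {w : ℕ → α} {q : ℕ} (hk : 1 ≤ k)
    (hwinj : ∀ i j, i ≤ q → j ≤ q → w i = w j → i = j)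
    (hstep : ∀ i, i < k → ∃ p p', p ≤ q ∧ p' ≤ q ∧ p < p' ∧ w p = v i ∧ w p' = v (i+1)) :
    embp v k w q := by
  have main : ∀ j, j ≤ k → ∀ i < j, ∀ p p', p ≤ q → p' ≤ q → w p = v i → w p' = v j →
      p < p' := by
    intro j
    induction j with
    | zero => intro _ i hi; omega
    | succ j ih =>
      intro hjk i hij p p' hp hp' he he'
      obtain ⟨r, r', hr, hr', hrr', her, her'⟩ := hstep j (by omega)
      have hp'r' : p' = r' := hwinj p' r' hp' hr' (by rw [he', her'])
      rcases Nat.lt_or_ge i j with h' | h'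
      · have := ih (by omega) i h' p r hp hr he her
        omega
      · have : i = j := by omega
        subst this
        have : p = r := hwinj p r hp hr (by rw [he, her])
        omega
  constructor
  · intro i hi
    rcases Nat.lt_or_ge i k with h' | h'
    · obtain ⟨r, r', hr, hr', hrr', her, her'⟩ := hstep i h'
      exact ⟨r, hr, her⟩
    · have hik : i = k := by omega
      obtain ⟨r, r', hr, hr', hrr', her, her'⟩ := hstep (k-1) (by omega)
      refine ⟨r', hr', ?_⟩
      rw [her', show k - 1 + 1 = k by omega, hik]
  · intro i j p p' hi hj hij hp hp' he he'
    exact main j hj i hij p p' hp hp' he he'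

/-- the linear-order data on the 0-faces of `y`. -/
structure LS (D : DFC α) (y : α) (k : ℕ) (v : ℕ → α) : Prop where
  inj : ∀ i j, i ≤ k → j ≤ k → v i = v j → i = j
  cover : ∀ u, D.Vs y u ↔ ∃ i, i ≤ k ∧ v i = u
  fwd : ∀ e i j, D.Es y e → i ≤ k → j ≤ k → D.precN (v i) e → D.precP (v j) e → i < j
  conn : ∀ i, i < k → ∃ e, D.Es y e ∧ D.precN (v i) e ∧ D.precP (v (i+1)) e

/-- the full induction statement. -/
def PP (D : DFC α) (y : α) : Prop :=
  ∃ (k : ℕ) (v : ℕ → α), LS D y k v ∧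
    (1 ≤ D.dim y → 1 ≤ k) ∧
    (D.dim y = 2 → (∀ i, i < k → ∃ e, D.precN e y ∧ D.precN (v i) e ∧ D.precP (v (i+1)) e) ∧
      D.precN (v 0) (D.tgt y) ∧ D.precP (v k) (D.tgt y)) ∧
    (3 ≤ D.dim y → ∀ u, D.Vs y u ↔ D.Vs (D.tgt y) u)

/-- inverting an embedding between two linear orders on the same vertex set. -/
lemma embp_inv {y z : α} {v : ℕ → α} {k : ℕ} {v' : ℕ → α} {k' : ℕ}
    (hy : LS D y k v) (hz : LS D z k' v') (hV : ∀ u, D.Vs y u ↔ D.Vs z u)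
    (h : embp v' k' v k) : embp v k v' k' := by
  constructor
  · intro i hi
    have hv : D.Vs y (v i) := (hy.cover (v i)).mpr ⟨i, hi, rfl⟩
    obtain ⟨p, hp, he⟩ := (hz.cover (v i)).mp ((hV _).mp hv)
    exact ⟨p, hp, he⟩
  · intro i j p p' hi hj hij hp hp' he he'
    have hne : p ≠ p' := by
      intro hpe
      subst hpe
      have : v i = v j := by rw [← he, he']
      have := hy.inj i j hi hj this
      omega
    rcases Nat.lt_or_ge p' p with h' | h'
    · exfalso
      have := h.2 p' p j i hp' hp h' hj hi he'.symm he.symm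
      omega
    · omega

end DFC
namespace DFC

variable {α : Type*} [Fintype α] {D : DFC α}

lemma PP_dim0 {y : α} (h : D.dim y = 0) : D.PP y := by
  refine ⟨0, fun _ => y, ⟨?_, ?_, ?_, ?_⟩, by omega, by omega, by omega⟩
  · intro i j hi hj _; omega
  · intro u
    constructor
    · rintro ⟨hu, huy⟩
      exact ⟨0, le_refl 0, (dle_eq_of_dim huy (by omega)).symm⟩
    · rintro ⟨i, hi, he⟩
      exact ⟨by rw [← he, h], by rw [← he]; exact dle_refl y⟩
  · rintro e i j ⟨he1, he2⟩ _ _ _ _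
    have := dle_dim he2; omega
  · intro i hi; omega

lemma PP_dim1 {y : α} (h : D.dim y = 1) : D.PP y := by
  obtain ⟨sy, hsy, hsyu⟩ := D.src_singleton y h
  have hty := D.tgt_precP y (by omega)
  set ty := D.tgt y with hty'
  have hdsy : D.dim sy = 0 := by have := D.dim_precN hsy; omega
  have hdty : D.dim ty = 0 := by have := D.dim_precP hty; omega
  have hne : sy ≠ ty := by
    intro he; exact notNP hsy (he ▸ hty)
  have hvy : ∀ u, D.dle u y → D.dim u = 0 → u = sy ∨ u = ty := by
    intro u huy hdu
    have hney : u ≠ y := by intro he; rw [he] at hdu; omega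
    obtain ⟨w, huw, hwy⟩ := dle_dest huy hney
    have hdw : D.dim w = 0 := by have := dim_prec hwy; omega
    have : u = w := dle_eq_of_dim huw (by omega)
    subst this
    cases hwy with
    | inl h' => exact Or.inl (hsyu u h')
    | inr h' => exact Or.inr (tgt_eq h')
  refine ⟨1, fun i => if i = 0 then sy else ty, ⟨?_, ?_, ?_, ?_⟩, fun _ => le_refl 1,
    by omega, by omega⟩
  · intro i j hi hj he
    interval_cases i <;> interval_cases j <;> simp_all
  · intro u
    constructor
    · rintro ⟨hu, huy⟩
      rcases hvy u huy hu with h' | h'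
      · exact ⟨0, by omega, by simp [h']⟩
      · exact ⟨1, le_refl 1, by simp [h']⟩
    · rintro ⟨i, hi, he⟩
      by_cases h0 : i = 0
      · rw [h0] at he; simp only [if_pos rfl] at he; subst he
        exact ⟨hdsy, dle_of_prec (Or.inl hsy)⟩
      · simp only [if_neg h0] at he; subst he
        exact ⟨hdty, dle_of_prec (Or.inr hty)⟩
  · rintro e i j ⟨he1, he2⟩ hi hj hN hP
    have hey : e = y := dle_eq_of_dim he2 (by omega)
    subst hey
    have h1 : (if i = 0 then sy else ty) = sy := hsyu _ hN
    have h2 : (if j = 0 then sy else ty) = ty := tgt_eq hP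
    have hi0 : i = 0 := by
      by_contra h'
      simp [h'] at h1
      exact hne h1.symm
    have hj1 : j = 1 := by
      by_contra h'
      have hj0 : j = 0 := by omega
      simp [hj0] at h2
      exact hne h2
    omega
  · intro i hi
    have : i = 0 := by omega
    subst this
    exact ⟨y, ⟨h, dle_refl y⟩, by simpa using hsy, by simpa using hty⟩

end DFC
namespace DFC

variable {α : Type*} [Fintype α] {D : DFC α}

lemma PP_dim2 {y : α} (h : D.dim y = 2) : D.PP y := by
  classical
  have hgy : D.precP (D.tgt y) y := D.tgt_precP y (by omega)
  set g := D.tgt y with hgdef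
  have hdg : D.dim g = 1 := by have := D.dim_precP hgy; omega
  obtain ⟨sg, hsg, hsgu⟩ := D.src_singleton g hdg
  have htg : D.precP (D.tgt g) g := D.tgt_precP g (by omega)
  set tg := D.tgt g with htgdef
  -- the first source edge
  have hF0ex : ∃ w, D.precN sg w ∧ D.precN w y := by
    obtain ⟨w, hw, -⟩ := TL4 hsg hgy
    cases hw with
    | inl h' => exact ⟨w, h'⟩
    | inr h' =>
      exfalso
      have hw : w = g := tgt_eq h'.2
      rw [hw] at h'
      exact notNP hsg h'.1
  -- the chain of source edges
  set F : ℕ → α := fun n =>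
    Nat.rec hF0ex.choose
      (fun _ prev => if h : ∃ c, D.precN (D.tgt prev) c ∧ D.precN c y then h.choose else prev) n
    with hFdef
  have hF0N : D.precN sg (F 0) := hF0ex.choose_spec.1
  have hF0y : D.precN (F 0) y := hF0ex.choose_spec.2
  have hFsucc : ∀ i, F (i+1) =
      if h : ∃ c, D.precN (D.tgt (F i)) c ∧ D.precN c y then h.choose else F i := fun i => rfl
  have hFsrc : ∀ i, D.precN (F i) y := by
    intro i
    induction i with
    | zero => exact hF0y
    | succ i ih =>
      rw [hFsucc i]
      by_cases h' : ∃ c, D.precN (D.tgt (F i)) c ∧ D.precN c y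
      · rw [dif_pos h']; exact h'.choose_spec.2
      · rw [dif_neg h']; exact ih
  have hdF : ∀ i, D.dim (F i) = 1 := by
    intro i; have := D.dim_precN (hFsrc i); omega
  have htgtPF : ∀ i, D.precP (D.tgt (F i)) (F i) := fun i => D.tgt_precP _ (by rw [hdF i])
  -- before stopping, the chain makes proper steps
  have hstep' : ∀ i, D.tgt (F i) ≠ tg → D.precN (D.tgt (F i)) (F (i+1)) := by
    intro i hne
    have hex : ∃ c, D.precN (D.tgt (F i)) c ∧ D.precN c y := by
      obtain ⟨w, hw, -⟩ := TL2 (htgtPF i) (hFsrc i)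
      cases hw with
      | inl h' => exact ⟨w, h'⟩
      | inr h' =>
        exfalso
        exact hne (by rw [tgt_eq h'.2] at h'; exact (tgt_eq h'.1).symm ▸ rfl)
    rw [hFsucc i, dif_pos hex]
    exact hex.choose_spec.1
  -- parent relation chains
  have hchain : ∀ i j, i < j → (∀ l, i ≤ l → l < j → D.precN (D.tgt (F l)) (F (l+1))) →
      Relation.TransGen (fun c b => D.precN c y ∧ D.precN b y ∧ D.precN (D.tgt b) c)
        (F j) (F i) := by
    intro i j hij
    induction j with
    | zero => omega
    | succ j ih =>
      intro hsteps
      rcases Nat.lt_or_ge i j with h' | h'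
      · exact Relation.TransGen.head
          ⟨hFsrc (j+1), hFsrc j, hsteps j (by omega) (by omega)⟩ (ih h' (fun l hl hl' => hsteps l hl (by omega)))
      · have : i = j := by omega
        subst this
        exact Relation.TransGen.single ⟨hFsrc (i+1), hFsrc i, hsteps i (le_refl i) (by omega)⟩
  -- the chain stops
  have hstopex : ∃ i, D.tgt (F i) = tg := by
    by_contra hc
    push_neg at hc
    obtain ⟨i, j, hne, he⟩ := Finite.exists_ne_map_eq_of_infinite F
    rcases Nat.lt_or_ge i j with h' | h'
    · have hc2 := hchain i j h' (fun l _ _ => hstep' l (hc l))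
      rw [← he] at hc2
      exact irrefl_parent y (F i) hc2
    · have h'' : j < i := by omega
      have hc2 := hchain j i h'' (fun l _ _ => hstep' l (hc l))
      rw [he] at hc2
      exact irrefl_parent y (F j) hc2
  set m := sInf {i | D.tgt (F i) = tg} with hmdef
  have hm : D.tgt (F m) = tg := Nat.sInf_mem hstopex
  have hmmin : ∀ i, i < m → D.tgt (F i) ≠ tg := fun i hi => Nat.notMem_of_lt_sInf hi
  have hstep : ∀ i, i < m → D.precN (D.tgt (F i)) (F (i+1)) := fun i hi => hstep' i (hmmin i hi)
  -- injectivity of the edge chain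
  have hFinj : ∀ i j, i ≤ m → j ≤ m → F i = F j → i = j := by
    intro i j hi hj he
    by_contra hne
    rcases Nat.lt_or_ge i j with h' | h'
    · have hc2 := hchain i j h' (fun l hl hl' => hstep l (by omega))
      rw [← he] at hc2
      exact irrefl_parent y (F i) hc2
    · have h'' : j < i := by omega
      have hc2 := hchain j i h'' (fun l hl hl' => hstep l (by omega))
      rw [he] at hc2
      exact irrefl_parent y (F j) hc2
  -- the vertex enumeration
  set vv : ℕ → α := fun i => if i = 0 then sg else D.tgt (F (i-1)) with hvvdef
  have hvv0 : vv 0 = sg := rfl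
  have hvvs : ∀ i, 1 ≤ i → vv i = D.tgt (F (i-1)) := by
    intro i hi; simp only [hvvdef]; rw [if_neg (by omega)]
  have hvvlast : vv (m+1) = tg := by rw [hvvs (m+1) (by omega)]; simpa using hm
  -- sources of the chain edges
  have hsrcF : ∀ i, i ≤ m → D.precN (vv i) (F i) := by
    intro i hi
    by_cases h0 : i = 0
    · subst h0; exact hF0N
    · rw [hvvs i (by omega)]
      have := hstep (i-1) (by omega)
      rwa [show i - 1 + 1 = i by omega] at this
  have hsrcFu : ∀ i u, i ≤ m → D.precN u (F i) → u = vv i := by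
    intro i u hi hu
    obtain ⟨s, hs, hsu⟩ := D.src_singleton (F i) (hdF i)
    rw [hsu u hu, ← hsu (vv i) (hsrcF i hi)]
  -- injectivity of the vertex enumeration
  have hvinj : ∀ i j, i ≤ m + 1 → j ≤ m + 1 → vv i = vv j → i = j := by
    have key : ∀ i j, i < j → j ≤ m + 1 → vv i = vv j → False := by
      intro i j hij hj he
      by_cases h0 : i = 0
      · subst h0
        -- sg = tgt (F (j-1))
        rw [hvv0] at he
        rw [hvvs j (by omega)] at he
        obtain ⟨w, -, hwu⟩ := TL1 hF0N hF0y
        have h1 : F (j-1) = w := hwu _ (Or.inl ⟨by rw [he]; exact htgtPF (j-1), hFsrc (j-1)⟩)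
        have h2 : g = w := hwu _ (Or.inr ⟨hsg, hgy⟩)
        exact notNP (hFsrc (j-1)) (by rw [h1, ← h2]; exact hgy)
      · rw [hvvs i (by omega), hvvs j (by omega)] at he
        have hi1 : i ≤ m := by omega
        obtain ⟨w, -, hwu⟩ := TL1 (hsrcF i hi1) (hFsrc i)
        have hvi : vv i = D.tgt (F (i-1)) := hvvs i (by omega)
        have h1 : F (i-1) = w := hwu _ (Or.inl ⟨by rw [hvi]; exact htgtPF (i-1), hFsrc (i-1)⟩)
        have h2 : F (j-1) = w := hwu _ (Or.inl ⟨by rw [hvi, he]; exact htgtPF (j-1), hFsrc (j-1)⟩)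
        have := hFinj (i-1) (j-1) (by omega) (by omega) (by rw [h1, h2])
        omega
    intro i j hi hj he
    by_contra hne
    rcases Nat.lt_or_ge i j with h' | h'
    · exact key i j h' hj he
    · exact key j i (by omega) hi he.symm
  -- coverage of the source edges
  have hcovE : ∀ c, D.precN c y → ∃ i, i ≤ m ∧ F i = c := by
    intro c
    refine (wf_parent (D := D) y).induction
      (C := fun c => D.precN c y → ∃ i, i ≤ m ∧ F i = c) c ?_
    intro c ih hc
    obtain ⟨w, hw, -⟩ := TL2 (D.tgt_precP c (by have := D.dim_precN hc; omega)) hc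
    cases hw with
    | inr h' =>
      -- c is the root : tgt c = tg
      have hwg : w = g := tgt_eq h'.2
      rw [hwg] at h'
      have htc : D.tgt c = tg := by rw [htgdef]; exact tgt_eq h'.1
      obtain ⟨w', -, hwu'⟩ := TL3 htg hgy
      have h1 : c = w' := hwu' _ (Or.inl ⟨by rw [← htc]; exact D.tgt_precP c (by have := D.dim_precN hc; omega), hc⟩)
      have h2 : F m = w' := hwu' _ (Or.inl ⟨by rw [← hm]; exact htgtPF m, hFsrc m⟩)
      exact ⟨m, le_refl m, by rw [h2, ← h1]⟩
    | inl h' =>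
      -- w is the parent of c
      obtain ⟨i, hi, hFi⟩ := ih w ⟨h'.2, hc, h'.1⟩ h'.2
      -- tgt c is the source of F i
      have htcs : D.tgt c = vv i := hsrcFu i (D.tgt c) hi (by rw [hFi]; exact h'.1)
      by_cases h0 : i = 0
      · exfalso
        subst h0
        rw [hvv0] at htcs
        obtain ⟨w', -, hwu'⟩ := TL1 hF0N hF0y
        have h1 : c = w' := hwu' _ (Or.inl ⟨by rw [← htcs]; exact D.tgt_precP c (by have := D.dim_precN hc; omega), hc⟩)
        have h2 : g = w' := hwu' _ (Or.inr ⟨hsg, hgy⟩)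
        exact notNP hc (by rw [h1, ← h2]; exact hgy)
      · refine ⟨i - 1, by omega, ?_⟩
        obtain ⟨w', -, hwu'⟩ := TL1 (hsrcF i hi) (hFsrc i)
        have hvi : vv i = D.tgt (F (i-1)) := hvvs i (by omega)
        have h1 : c = w' := hwu' _ (Or.inl ⟨by rw [← htcs]; exact D.tgt_precP c (by have := D.dim_precN hc; omega), hc⟩)
        have h2 : F (i-1) = w' := hwu' _ (Or.inl ⟨by rw [hvi]; exact htgtPF (i-1), hFsrc (i-1)⟩)
        rw [h2, ← h1]
  -- membership of the vertices
  have hvmem : ∀ i, i ≤ m + 1 → D.Vs y (vv i) := by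
    intro i hi
    by_cases h0 : i = 0
    · subst h0
      rw [hvv0]
      refine ⟨by have := D.dim_precN hsg; omega, ?_⟩
      exact dle_trans (dle_of_prec (Or.inl hsg)) (dle_of_prec (Or.inr hgy))
    · rw [hvvs i (by omega)]
      refine ⟨by have := D.dim_precP (htgtPF (i-1)); have := hdF (i-1); omega, ?_⟩
      exact dle_trans (dle_of_prec (Or.inr (htgtPF (i-1)))) (dle_of_prec (Or.inl (hFsrc (i-1))))
  -- edges of y are the chain edges and g
  have hedge : ∀ e, D.Es y e → D.precN e y ∨ e = g := by
    rintro e ⟨hde, hey⟩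
    have : D.prec e y := prec_of_dle_succ hey (by omega)
    cases this with
    | inl h' => exact Or.inl h'
    | inr h' => exact Or.inr (tgt_eq h')
  refine ⟨m+1, vv, ⟨hvinj, ?_, ?_, ?_⟩, fun _ => by omega, ?_, by omega⟩
  · -- cover
    intro u
    constructor
    · rintro ⟨hdu, huy⟩
      have hney : u ≠ y := by intro he; rw [he] at hdu; omega
      obtain ⟨w, huw, hwy⟩ := dle_dest huy hney
      have hdw : D.dim w = 1 := by have := dim_prec hwy; omega
      have hprec : D.prec u w := prec_of_dle_succ huw (by omega)
      have hwcase : D.precN w y ∨ w = g := by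
        cases hwy with
        | inl h' => exact Or.inl h'
        | inr h' => exact Or.inr (tgt_eq h')
      cases hwcase with
      | inl h' =>
        obtain ⟨i, hi, hFi⟩ := hcovE w h'
        cases hprec with
        | inl h'' => exact ⟨i, by omega, (hsrcFu i u hi (hFi ▸ h'')).symm⟩
        | inr h'' =>
          refine ⟨i+1, by omega, ?_⟩
          rw [hvvs (i+1) (by omega)]
          have hu : u = D.tgt (F i) := by rw [← hFi] at h''; exact tgt_eq h''
          simp only [Nat.add_sub_cancel]
          exact hu.symm
      | inr h' =>
        subst h'
        cases hprec with
        | inl h'' =>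
          refine ⟨0, by omega, ?_⟩
          rw [hvv0]
          exact (hsgu u h'').symm
        | inr h'' =>
          refine ⟨m+1, le_refl _, ?_⟩
          rw [hvvlast, htgdef]
          exact (tgt_eq h'').symm
    · rintro ⟨i, hi, he⟩
      exact he ▸ hvmem i hi
  · -- fwd
    intro e i j hEs hi hj hN hP
    cases hedge e hEs with
    | inl h' =>
      obtain ⟨l, hl, hFl⟩ := hcovE e h'
      subst hFl
      have h1 : vv i = vv l := hsrcFu l (vv i) hl hN
      have h2 : vv j = vv (l+1) := by
        rw [hvvs (l+1) (by omega)]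
        simpa using tgt_eq hP
      have := hvinj i l hi (by omega) h1
      have := hvinj j (l+1) hj (by omega) h2
      omega
    | inr h' =>
      subst h'
      have h1 : vv i = vv 0 := by rw [hvv0]; exact hsgu _ hN
      have h2 : vv j = vv (m+1) := by rw [hvvlast]; exact tgt_eq hP
      have := hvinj i 0 hi (by omega) h1
      have := hvinj j (m+1) hj (by omega) h2
      omega
  · -- conn
    intro i hi
    refine ⟨F i, ⟨hdF i, dle_of_prec (Or.inl (hFsrc i))⟩, hsrcF i (by omega), ?_⟩
    rw [hvvs (i+1) (by omega)]
    simpa using htgtPF i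
  · -- extra₂
    intro _
    refine ⟨?_, ?_, ?_⟩
    · intro i hi
      exact ⟨F i, hFsrc i, hsrcF i (by omega), by rw [hvvs (i+1) (by omega)]; simpa using htgtPF i⟩
    · rw [hvv0]; exact hsg
    · rw [hvvlast]; exact htg

end DFC
namespace DFC

variable {α : Type*} [Fintype α] {D : DFC α}

lemma PP_high {x : α} (hd : 3 ≤ D.dim x) (IH : ∀ z, D.dim z < D.dim x → D.PP z) :
    D.PP x := by
  classical
  have hgx : D.precP (D.tgt x) x := D.tgt_precP x (by omega)
  set g := D.tgt x with hgdef
  have hdg : D.dim g = D.dim x - 1 := by have := D.dim_precP hgx; omega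
  obtain ⟨q, w, hgLS, hgk1, -, -⟩ := IH g (by omega)
  have hq1 : 1 ≤ q := hgk1 (by omega)
  -- every proper face of x lies under a facet
  have hfacet : ∀ u, D.dle u x → u ≠ x → ∃ z, D.dle u z ∧ (D.precN z x ∨ z = g) := by
    intro u hu hne
    obtain ⟨z, huz, hzx⟩ := dle_dest hu hne
    cases hzx with
    | inl h' => exact ⟨z, huz, Or.inl h'⟩
    | inr h' => exact ⟨z, huz, Or.inr (tgt_eq h')⟩
  -- KEY : each source facet's vertex enumeration embeds into that of g
  have KEY : ∀ b, D.precN b x →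
      ∃ (kb : ℕ) (vb : ℕ → α), LS D b kb vb ∧ 1 ≤ kb ∧ embp vb kb w q := by
    rcases Nat.lt_or_ge (D.dim x) 4 with h3 | h4
    · -- dimension 3 : recursion towards the leaves of the source tree
      have h3' : D.dim x = 3 := by omega
      have FWD : ∀ b, D.precN b x → ∀ z, D.precN z b → ∀ u u', D.precN u z → D.precP u' z →
          ∃ p p', p ≤ q ∧ p' ≤ q ∧ p < p' ∧ w p = u ∧ w p' = u' := by
        intro b
        refine (wf_child (D := D) x).induction
          (C := fun b => D.precN b x → ∀ z, D.precN z b → ∀ u u', D.precN u z → D.precP u' z →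
            ∃ p p', p ≤ q ∧ p' ≤ q ∧ p < p' ∧ w p = u ∧ w p' = u') b ?_
        intro b ih hbx z hzb u u' hu hu'
        have hdb : D.dim b = 2 := by have := D.dim_precN hbx; omega
        have hdz : D.dim z = 1 := by have := D.dim_precN hzb; omega
        obtain ⟨w', hw', -⟩ := TL1 hzb hbx
        cases hw' with
        | inr h' =>
          -- z is a source of g
          have hwg : w' = g := tgt_eq h'.2
          rw [hwg] at h'
          have hEz : D.Es g z := ⟨hdz, dle_of_prec (Or.inl h'.1)⟩
          have hVu : D.Vs g u := ⟨by have := D.dim_precN hu; omega,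
            dle_trans (dle_of_prec (Or.inl hu)) (dle_of_prec (Or.inl h'.1))⟩
          have hVu' : D.Vs g u' := ⟨by have := D.dim_precP hu'; omega,
            dle_trans (dle_of_prec (Or.inr hu')) (dle_of_prec (Or.inl h'.1))⟩
          obtain ⟨p, hp, hep⟩ := (hgLS.cover u).mp hVu
          obtain ⟨p', hp', hep'⟩ := (hgLS.cover u').mp hVu'
          refine ⟨p, p', hp, hp', ?_, hep, hep'⟩
          exact hgLS.fwd z p p' hEz hp hp' (by rw [hep]; exact hu) (by rw [hep']; exact hu')
        | inl h' =>
          -- z is the target of a child b'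
          set b' := w' with hbdef
          have hzb' : z = D.tgt b' := tgt_eq h'.1
          have hcr : D.precN b' x ∧ D.precN b x ∧ D.precN (D.tgt b') b :=
            ⟨h'.2, hbx, by rw [← hzb']; exact hzb⟩
          obtain ⟨kb, vb, hLSb, hk1b, hx2b, -⟩ := IH b' (by have := D.dim_precN h'.2; omega)
          have hdb' : D.dim b' = 2 := by have := D.dim_precN h'.2; omega
          obtain ⟨hconn2, hv0, hvk⟩ := hx2b hdb'
          have hembb : embp vb kb w q := by
            refine embp_of_fwd (hk1b (by omega)) hgLS.inj ?_
            intro i hi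
            obtain ⟨e, he1, he2, he3⟩ := hconn2 i hi
            exact ih b' hcr h'.2 e he1 (vb i) (vb (i+1)) he2 he3
          -- u is the first vertex and u' the last vertex of b'
          have hu0 : u = vb 0 := by
            obtain ⟨s, hs, hsu⟩ := D.src_singleton z hdz
            rw [hsu u hu, ← hsu (vb 0) (by rw [hzb']; exact hv0)]
          have huk : u' = vb kb := by
            have h1 : u' = D.tgt z := tgt_eq hu'
            have h2 : vb kb = D.tgt z := tgt_eq (by rw [hzb']; exact hvk)
            rw [h1, h2]
          obtain ⟨p, hp, hep⟩ := hembb.1 0 (by omega)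
          obtain ⟨p', hp', hep'⟩ := hembb.1 kb (le_refl kb)
          refine ⟨p, p', hp, hp', ?_, by rw [hep, hu0], by rw [hep', huk]⟩
          exact hembb.2 0 kb p p' (by omega) (le_refl kb) (hk1b (by omega)) hp hp' hep hep'
      intro b hbx
      obtain ⟨kb, vb, hLSb, hk1b, hx2b, -⟩ := IH b (by have := D.dim_precN hbx; omega)
      have hdb : D.dim b = 2 := by have := D.dim_precN hbx; omega
      obtain ⟨hconn2, -, -⟩ := hx2b hdb
      refine ⟨kb, vb, hLSb, hk1b (by omega), embp_of_fwd (hk1b (by omega)) hgLS.inj ?_⟩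
      intro i hi
      obtain ⟨e, he1, he2, he3⟩ := hconn2 i hi
      exact FWD b hbx e he1 (vb i) (vb (i+1)) he2 he3
    · -- dimension ≥ 4 : recursion towards the root of the source tree
      intro b
      refine (wf_parent (D := D) x).induction
        (C := fun b => D.precN b x →
          ∃ (kb : ℕ) (vb : ℕ → α), LS D b kb vb ∧ 1 ≤ kb ∧ embp vb kb w q) b ?_
      intro b ih hbx
      have hdb : D.dim b = D.dim x - 1 := by have := D.dim_precN hbx; omega
      obtain ⟨kb, vb, hLSb, hk1b, -, hAb⟩ := IH b (by omega)
      have hVb : ∀ u, D.Vs b u ↔ D.Vs (D.tgt b) u := hAb (by omega)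
      have hgb : D.precP (D.tgt b) b := D.tgt_precP b (by omega)
      have hdtb : D.dim (D.tgt b) = D.dim x - 2 := by have := D.dim_precP hgb; omega
      obtain ⟨kc, vc, hLSc, hk1c, -, -⟩ := IH (D.tgt b) (by omega)
      have hk1c' : 1 ≤ kc := hk1c (by omega)
      -- the enumeration of tgt b embeds into that of b
      have he1 : embp vc kc vb kb := by
        refine embp_of_fwd hk1c' hLSb.inj ?_
        intro i hi
        obtain ⟨e, he1, he2, he3⟩ := hLSc.conn i hi
        have hEe : D.Es b e := ⟨he1.1, dle_trans he1.2 (dle_of_prec (Or.inr hgb))⟩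
        have hVi : D.Vs b (vc i) := (hVb _).mpr ((hLSc.cover _).mpr ⟨i, by omega, rfl⟩)
        have hVi' : D.Vs b (vc (i+1)) := (hVb _).mpr ((hLSc.cover _).mpr ⟨i+1, by omega, rfl⟩)
        obtain ⟨p, hp, hep⟩ := (hLSb.cover _).mp hVi
        obtain ⟨p', hp', hep'⟩ := (hLSb.cover _).mp hVi'
        refine ⟨p, p', hp, hp', ?_, hep, hep'⟩
        exact hLSb.fwd e p p' hEe hp hp' (by rw [hep]; exact he2) (by rw [hep']; exact he3)
      have he2 : embp vb kb vc kc := embp_inv hLSb hLSc hVb he1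
      -- the enumeration of tgt b embeds into that of g (via the parent or directly)
      have he3 : embp vc kc w q := by
        obtain ⟨w', hw', -⟩ := TL2 hgb hbx
        cases hw' with
        | inr h' =>
          -- b is the root : tgt b = tgt g
          have hwg : w' = g := tgt_eq h'.2
          rw [hwg] at h'
          have htb : D.tgt b = D.tgt g := tgt_eq h'.1
          refine embp_of_fwd hk1c' hgLS.inj ?_
          intro i hi
          obtain ⟨e, hee1, hee2, hee3⟩ := hLSc.conn i hi
          have hEe : D.Es g e := ⟨hee1.1, dle_trans hee1.2
            (by rw [htb]; exact dle_of_prec (Or.inr (D.tgt_precP g (by omega))))⟩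
          have hVi : D.Vs g (vc i) := ⟨((hLSc.cover _).mpr ⟨i, by omega, rfl⟩).1,
            dle_trans ((hLSc.cover _).mpr ⟨i, by omega, rfl⟩).2
              (by rw [htb]; exact dle_of_prec (Or.inr (D.tgt_precP g (by omega))))⟩
          have hVi' : D.Vs g (vc (i+1)) := ⟨((hLSc.cover _).mpr ⟨i+1, by omega, rfl⟩).1,
            dle_trans ((hLSc.cover _).mpr ⟨i+1, by omega, rfl⟩).2
              (by rw [htb]; exact dle_of_prec (Or.inr (D.tgt_precP g (by omega))))⟩
          obtain ⟨p, hp, hep⟩ := (hgLS.cover _).mp hVi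
          obtain ⟨p', hp', hep'⟩ := (hgLS.cover _).mp hVi'
          refine ⟨p, p', hp, hp', ?_, hep, hep'⟩
          exact hgLS.fwd e p p' hEe hp hp' (by rw [hep]; exact hee2) (by rw [hep']; exact hee3)
        | inl h' =>
          -- h' : precN (tgt b) w' ∧ precN w' x : w' is the parent
          obtain ⟨kc', vc', hLSc', -, hembc⟩ := ih w' ⟨h'.2, hbx, h'.1⟩ h'.2
          have he4 : embp vc kc vc' kc' := by
            refine embp_of_fwd hk1c' hLSc'.inj ?_
            intro i hi
            obtain ⟨e, hee1, hee2, hee3⟩ := hLSc.conn i hi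
            have hEe : D.Es w' e := ⟨hee1.1, dle_trans hee1.2 (dle_of_prec (Or.inl h'.1))⟩
            have hVi : D.Vs w' (vc i) := ⟨((hLSc.cover _).mpr ⟨i, by omega, rfl⟩).1,
              dle_trans ((hLSc.cover _).mpr ⟨i, by omega, rfl⟩).2 (dle_of_prec (Or.inl h'.1))⟩
            have hVi' : D.Vs w' (vc (i+1)) := ⟨((hLSc.cover _).mpr ⟨i+1, by omega, rfl⟩).1,
              dle_trans ((hLSc.cover _).mpr ⟨i+1, by omega, rfl⟩).2 (dle_of_prec (Or.inl h'.1))⟩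
            obtain ⟨p, hp, hep⟩ := (hLSc'.cover _).mp hVi
            obtain ⟨p', hp', hep'⟩ := (hLSc'.cover _).mp hVi'
            refine ⟨p, p', hp, hp', ?_, hep, hep'⟩
            exact hLSc'.fwd e p p' hEe hp hp' (by rw [hep]; exact hee2) (by rw [hep']; exact hee3)
          exact embp_trans he4 hembc
      exact ⟨kb, vb, hLSb, hk1b (by omega), embp_trans he2 he3⟩
  -- assembly : the enumeration of g works for x
  have hcovx : ∀ u, D.Vs x u ↔ ∃ i, i ≤ q ∧ w i = u := by
    intro u
    constructor
    · rintro ⟨hdu, hux⟩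
      have hne : u ≠ x := by intro he; rw [he] at hdu; omega
      obtain ⟨z, huz, hz⟩ := hfacet u hux hne
      cases hz with
      | inl h' =>
        obtain ⟨kb, vb, hLSb, hk1b, hemb⟩ := KEY z h'
        obtain ⟨i, hi, hei⟩ := (hLSb.cover u).mp ⟨hdu, huz⟩
        obtain ⟨p, hp, hep⟩ := hemb.1 i hi
        exact ⟨p, hp, by rw [hep, hei]⟩
      | inr h' =>
        subst h'
        exact (hgLS.cover u).mp ⟨hdu, huz⟩
    · rintro ⟨i, hi, he⟩
      have hv := (hgLS.cover (w i)).mpr ⟨i, hi, rfl⟩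
      refine ⟨by rw [← he]; exact hv.1, ?_⟩
      rw [← he]
      exact dle_trans hv.2 (dle_of_prec (Or.inr hgx))
  refine ⟨q, w, ⟨hgLS.inj, hcovx, ?_, ?_⟩, fun _ => hq1, fun h2 => absurd h2 (by omega),
    fun _ u => (hcovx u).trans (hgLS.cover u).symm⟩
  · -- fwd
    intro e i j hEs hi hj hN hP
    have hne : e ≠ x := by intro he; rw [he] at hEs; have := hEs.1; omega
    obtain ⟨z, hez, hz⟩ := hfacet e hEs.2 hne
    cases hz with
    | inr h' =>
      subst h'
      exact hgLS.fwd e i j ⟨hEs.1, hez⟩ hi hj hN hP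
    | inl h' =>
      obtain ⟨kb, vb, hLSb, hk1b, hemb⟩ := KEY z h'
      have hVi : D.Vs z (w i) := ⟨by have := D.dim_precN hN; have := hEs.1; omega,
        dle_trans (dle_of_prec (Or.inl hN)) hez⟩
      have hVj : D.Vs z (w j) := ⟨by have := D.dim_precP hP; have := hEs.1; omega,
        dle_trans (dle_of_prec (Or.inr hP)) hez⟩
      obtain ⟨i₀, hi₀, hei₀⟩ := (hLSb.cover _).mp hVi
      obtain ⟨j₀, hj₀, hej₀⟩ := (hLSb.cover _).mp hVj
      have h1 : i₀ < j₀ := hLSb.fwd e i₀ j₀ ⟨hEs.1, hez⟩ hi₀ hj₀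
        (by rw [hei₀]; exact hN) (by rw [hej₀]; exact hP)
      exact hemb.2 i₀ j₀ i j hi₀ hj₀ h1 hi hj hei₀.symm hej₀.symm
  · -- conn
    intro i hi
    obtain ⟨e, he1, he2, he3⟩ := hgLS.conn i hi
    exact ⟨e, ⟨he1.1, dle_trans he1.2 (dle_of_prec (Or.inr hgx))⟩, he2, he3⟩

end DFC
namespace DFC

variable {α : Type*} [Fintype α]

lemma PP_all (D : DFC α) : ∀ y, D.PP y := by
  have H : ∀ (n : ℕ) (y : α), D.dim y = n → D.PP y := by
    intro n
    induction n using Nat.strong_induction_on with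
    | _ n ih =>
      intro y hy
      rcases Nat.lt_or_ge n 3 with h3 | h3
      · interval_cases n
        · exact PP_dim0 hy
        · exact PP_dim1 hy
        · exact PP_dim2 hy
      · exact PP_high (by omega) (fun z hz => ih (D.dim z) (by omega) z rfl)
  exact fun y => H (D.dim y) y rfl

end DFC

theorem dfc_ltP_linear_on_C0_aux {α : Type*} [Fintype α] (D : DFC α) :
    (∀ x : α, D.dim x = 0 → ¬ D.ltP x x) ∧
    (∀ x y : α, D.dim x = 0 → D.dim y = 0 → x ≠ y → D.ltP x y ∨ D.ltP y x) := by
  classical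
  obtain ⟨k, v, hLS, -, -, -⟩ := D.PP_all D.top
  have hmem : ∀ u, D.dim u = 0 → ∃ i, i ≤ k ∧ v i = u := fun u hu =>
    (hLS.cover u).mp ⟨hu, D.le_top u⟩
  have hchain : ∀ j, j ≤ k → ∀ i, i < j → D.ltP (v i) (v j) := by
    intro j
    induction j with
    | zero => intro _ i hi; omega
    | succ j ihj =>
      intro hj i hi
      have hstep : D.tri (v j) (v (j+1)) := by
        obtain ⟨e, he1, he2, he3⟩ := hLS.conn j (by omega)
        exact ⟨e, he2, he3⟩
      rcases Nat.lt_or_ge i j with h' | h'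
      · exact Relation.TransGen.tail (ihj (by omega) i h') hstep
      · have : i = j := by omega
        subst this
        exact Relation.TransGen.single hstep
  have hfw : ∀ a b, D.ltP a b → D.dim a = 0 →
      D.dim b = 0 ∧ ∃ i j, i ≤ k ∧ j ≤ k ∧ v i = a ∧ v j = b ∧ i < j := by
    intro a b h hda
    induction h with
    | @single b' h' =>
      obtain ⟨t, htN, htP⟩ := h'
      have hdt : D.dim t = 1 := by have := D.dim_precN htN; omega
      have hdb : D.dim b' = 0 := by have := D.dim_precP htP; omega
      obtain ⟨i, hi, hvi⟩ := hmem a hda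
      obtain ⟨j, hj, hvj⟩ := hmem b' hdb
      refine ⟨hdb, i, j, hi, hj, hvi, hvj, ?_⟩
      exact hLS.fwd t i j ⟨hdt, D.le_top t⟩ hi hj (by rw [hvi]; exact htN)
        (by rw [hvj]; exact htP)
    | @tail b' b'' h1 h2 ih =>
      obtain ⟨hdb', i, j, hi, hj, hvi, hvj, hij⟩ := ih
      obtain ⟨t, htN, htP⟩ := h2
      have hdt : D.dim t = 1 := by have := D.dim_precN htN; omega
      have hdb'' : D.dim b'' = 0 := by have := D.dim_precP htP; omega
      obtain ⟨j', hj', hvj'⟩ := hmem b'' hdb''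
      refine ⟨hdb'', i, j', hi, hj', hvi, hvj', ?_⟩
      have : j < j' := hLS.fwd t j j' ⟨hdt, D.le_top t⟩ hj hj'
        (by rw [hvj]; exact htN) (by rw [hvj']; exact htP)
      omega
  constructor
  · intro x hx hlt
    obtain ⟨-, i, j, hi, hj, hvi, hvj, hij⟩ := hfw x x hlt hx
    have := hLS.inj i j hi hj (by rw [hvi, hvj])
    omega
  · intro x y hx hy hne
    obtain ⟨i, hi, hvi⟩ := hmem x hx
    obtain ⟨j, hj, hvj⟩ := hmem y hy
    rcases Nat.lt_or_ge i j with h' | h'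
    · left
      have := hchain j hj i h'
      rwa [hvi, hvj] at this
    · have hij : j < i := by
        rcases Nat.lt_or_ge j i with h'' | h''
        · exact h''
        · exfalso
          have : i = j := by omega
          subst this
          rw [hvi] at hvj
          exact hne hvj
      right
      have := hchain i hi j hij
      rwa [hvj, hvi] at this

/-- `<⁺` restricted to `C₀` is a strict linear order: it is
irreflexive and any two distinct `0`-faces are comparable. -/
theorem dfc_ltP_linear_on_C0 {α : Type*} [Fintype α] (D : DFC α) :
    (∀ x : α, D.dim x = 0 → ¬ D.ltP x x) ∧
    (∀ x y : α, D.dim x = 0 → D.dim y = 0 → x ≠ y → D.ltP x y ∨ D.ltP y x) := by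
  exact dfc_ltP_linear_on_C0_aux D
end

section
/- Positive parenthesis completion: let C be a dendritic face complex, let β ∈ {+,−}, and suppose e ≺^β d ≺⁺ c ≺⁻ b in C. Then there exist unique p ≥ 0 and faces c = c₀, c₁, …, c_p, c_{p+1} = γ(b) and d₀, d₁, …, d_p such that: c_i ≺⁻ b for all 0 ≤ i ≤ p; d_i ≺⁻ c_i for all 0 ≤ i ≤ p; d_i ≺⁺ c_{i+1} for all 0 ≤ i ≤ p−1; d_p ≺⁻ c_{p+1} = γ(b); and e ≺^β d_i for all 0 ≤ i ≤ p. -/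
section AuxPath
variable {α : Type*} (r : α → α → Prop)

lemma transGen_path' {a b : α} (h : Relation.TransGen r a b) :
    ∃ p : ℕ, 1 ≤ p ∧ ∃ f : ℕ → α, f 0 = a ∧ f p = b ∧ ∀ i < p, r (f i) (f (i + 1)) := by
  induction h with
  | @single c h =>
    exact ⟨1, le_refl 1, fun i => if i = 0 then a else c, by simp, by simp, by
      intro i hi
      interval_cases i
      simpa using h⟩
  | @tail b c _ hbc ih =>
    obtain ⟨p, hp, f, hf0, hfp, hstep⟩ := ih
    refine ⟨p + 1, by omega, fun i => if i ≤ p then f i else c, by simp [hf0], by simp, ?_⟩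
    intro i hi
    rcases lt_or_eq_of_le (Nat.lt_succ_iff.mp hi) with h' | h'
    · simpa [Nat.le_of_lt h', Nat.succ_le_of_lt h'] using hstep i h'
    · subst h'
      simpa [hfp] using hbc
end AuxPath

namespace DFCProof

variable {α : Type*} [Fintype α] (D : DFC α)

/-- Given `e ≺^β dm ≺⁺ c₀`, there is a unique `d' ≠ dm` with `e ≺^β d' ≺⁻ c₀`. -/
lemma nextD {β : Bool} {e dm c₀ : α} (h1 : sprec D.precN D.precP β e dm)
    (h2 : D.precP dm c₀) :
    ∃! d', d' ≠ dm ∧ sprec D.precN D.precP β e d' ∧ D.precN d' c₀ := by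
  obtain ⟨y', ⟨hne, a', b', hb', ha', hcond⟩, huniq⟩ := D.thin true β c₀ dm e h1 h2
  have ha'f : a' = false := by
    cases a' with
    | true => exact absurd ((D.precP_unique ha').trans (D.precP_unique h2).symm) hne
    | false => rfl
  subst ha'f
  have hb'β : b' = β := by cases β <;> cases b' <;> first | rfl | simp at hcond
  subst hb'β
  refine ⟨y', ⟨hne, hb', ha'⟩, ?_⟩
  rintro d'' ⟨hne'', hb'', ha''⟩
  exact huniq d'' ⟨hne'', false, b', hb'', ha'', by cases b' <;> simp⟩

lemma tgt_ne {c₀ b : α} (h : D.precN c₀ b) : D.tgt b ≠ c₀ := by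
  intro he
  have hd : 1 ≤ D.dim b := by have := D.dim_precN h; omega
  exact D.not_both c₀ b ⟨h, he ▸ D.tgt_precP b hd⟩

lemma nextC {d₀ c₀ b : α} (h1 : D.precN d₀ c₀) (h2 : D.precN c₀ b) :
    D.precN d₀ (D.tgt b) ∨ ∃ c₁, D.precP d₀ c₁ ∧ D.precN c₁ b := by
  obtain ⟨y', ⟨hne, a', b', hb', ha', hcond⟩, huniq⟩ := D.thin false false b c₀ d₀ h1 h2
  cases a' with
  | true =>
    have hb'f : b' = false := by simp_all
    subst hb'f
    have : y' = D.tgt b := D.precP_unique ha'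
    exact Or.inl (this ▸ hb')
  | false =>
    have hb't : b' = true := by simp_all
    subst hb't
    exact Or.inr ⟨y', hb', ha'⟩

lemma nextC_unique {d₀ c₀ b c₁ c₁' : α} (h1 : D.precN d₀ c₀) (h2 : D.precN c₀ b)
    (hc : D.precP d₀ c₁) (hc' : D.precN c₁ b)
    (hd : D.precP d₀ c₁') (hd' : D.precN c₁' b) : c₁ = c₁' := by
  obtain ⟨y', hy', huniq⟩ := D.thin false false b c₀ d₀ h1 h2
  have hne : c₁ ≠ c₀ := fun he => D.not_both d₀ c₀ ⟨h1, he ▸ hc⟩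
  have hne' : c₁' ≠ c₀ := fun he => D.not_both d₀ c₀ ⟨h1, he ▸ hd⟩
  have e1 : c₁ = y' := huniq c₁ ⟨hne, false, true, hc, hc', by simp⟩
  have e2 : c₁' = y' := huniq c₁' ⟨hne', false, true, hd, hd', by simp⟩
  rw [e1, e2]

lemma nextC_excl {d₀ c₀ b c₁ : α} (h1 : D.precN d₀ c₀) (h2 : D.precN c₀ b)
    (ht : D.precN d₀ (D.tgt b)) (hc : D.precP d₀ c₁) (hc' : D.precN c₁ b) : False := by
  obtain ⟨y', hy', huniq⟩ := D.thin false false b c₀ d₀ h1 h2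
  have hd : 1 ≤ D.dim b := by have := D.dim_precN h2; omega
  have hne : c₁ ≠ c₀ := fun he => D.not_both d₀ c₀ ⟨h1, he ▸ hc⟩
  have e1 : c₁ = y' := huniq c₁ ⟨hne, false, true, hc, hc', by simp⟩
  have e2 : D.tgt b = y' :=
    huniq (D.tgt b) ⟨tgt_ne D h2, true, false, ht, D.tgt_precP b hd, by simp⟩
  exact D.not_both c₁ b ⟨hc', (e2.trans e1.symm) ▸ D.tgt_precP b hd⟩

/-- The successor relation along `δ(b)`. -/
def Step (D : DFC α) (b : α) (y x : α) : Prop :=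
  D.precN y b ∧ D.precN x b ∧ D.precN (D.tgt y) x

lemma step_wf (b : α) : WellFounded (Step D b) := by
  have hirr : ∀ z, ¬ Relation.TransGen (Step D b) z z := by
    intro z hz
    obtain ⟨p, hp, f, hf0, hfp, hstep⟩ := transGen_path' _ hz
    have hmemf : ∀ j ≤ p, D.precN (f j) b := by
      intro j hj
      rcases Nat.lt_or_ge j p with h | h
      · exact (hstep j h).1
      · have hjp : j = p := le_antisymm hj h
        subst hjp
        rw [hfp, ← hf0]
        exact (hstep 0 (by omega)).1
    refine D.no_cycle b p hp (fun i => f (p + 1 - i)) ?_ ?_ ?_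
    · intro i hi1 hip
      exact hmemf _ (by omega)
    · simp only [Nat.sub_self]
      have h1 : p + 1 - 1 = p := by omega
      rw [h1, hf0, hfp]
    · intro i hi1 hip
      have e1 : p + 1 - (i + 1) = p - i := by omega
      have e2 : p + 1 - i = (p - i) + 1 := by omega
      show D.precN (D.tgt (f (p + 1 - (i + 1)))) (f (p + 1 - i))
      rw [e1, e2]
      exact (hstep (p - i) (by omega)).2.2
  haveI : IsTrans α (Relation.TransGen (Step D b)) := ⟨fun _ _ _ => Relation.TransGen.trans⟩
  haveI : IsIrrefl α (Relation.TransGen (Step D b)) := ⟨hirr⟩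
  exact Subrelation.wf (fun h => Relation.TransGen.single h)
    (Finite.wellFounded_of_trans_of_irrefl _)

/-- The property of the theorem, as a predicate of the starting face `c` and the list. -/
def Good (D : DFC α) (β : Bool) (e b c : α) (l : List (α × α)) : Prop :=
  l ≠ [] ∧ l.head?.map Prod.fst = some c ∧
  (∀ q ∈ l, D.precN q.1 b ∧ D.precN q.2 q.1 ∧ sprec D.precN D.precP β e q.2) ∧
  l.Chain' (fun q r => D.precP q.2 r.1) ∧
  (∃ q, l.getLast? = some q ∧ D.precN q.2 (D.tgt b))

lemma good_exists (β : Bool) (e b : α) : ∀ c₀ : α, D.precN c₀ b →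
    ∀ dm, sprec D.precN D.precP β e dm → D.precP dm c₀ →
    ∃ l, Good D β e b c₀ l := by
  intro c₀
  induction c₀ using WellFounded.induction (step_wf D b) with
  | _ c₀ ih =>
  intro hc₀b dm hdm hdmc₀
  obtain ⟨d₀, ⟨hne, hβ, hN⟩, _⟩ := nextD D hdm hdmc₀
  rcases nextC D hN hc₀b with ht | ⟨c₁, hP, hc₁b⟩
  · refine ⟨[(c₀, d₀)], by simp, by simp, ?_, List.IsChain.singleton _, ⟨(c₀, d₀), by simp, ht⟩⟩
    rintro q hq
    simp only [List.mem_singleton] at hq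
    subst hq
    exact ⟨hc₀b, hN, hβ⟩
  · have hstep : Step D b c₁ c₀ := ⟨hc₁b, hc₀b, by rw [← D.precP_unique hP]; exact hN⟩
    obtain ⟨l', hl0, hlh, hlm, hlc, hll⟩ := ih c₁ hstep hc₁b d₀ hβ hP
    obtain ⟨r, t', rfl⟩ := List.exists_cons_of_ne_nil hl0
    have hr1 : r.1 = c₁ := by simpa using hlh
    refine ⟨(c₀, d₀) :: r :: t', by simp, by simp, ?_, ?_, ?_⟩
    · rintro q hq
      rcases List.mem_cons.mp hq with rfl | hq'
      · exact ⟨hc₀b, hN, hβ⟩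
      · exact hlm q hq'
    · exact List.IsChain.cons_cons (by rw [hr1]; exact hP) hlc
    · obtain ⟨w, hw, hwt⟩ := hll
      exact ⟨w, by rw [List.getLast?_cons_cons]; exact hw, hwt⟩

lemma good_unique (β : Bool) (e b : α) : ∀ (l₁ l₂ : List (α × α)) (c₀ dm : α),
    D.precN c₀ b → sprec D.precN D.precP β e dm → D.precP dm c₀ →
    Good D β e b c₀ l₁ → Good D β e b c₀ l₂ → l₁ = l₂ := by
  intro l₁
  induction l₁ with
  | nil => rintro l₂ c₀ dm _ _ _ ⟨h, _⟩ _; exact absurd rfl h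
  | cons q t ih =>
    rintro l₂ c₀ dm hc₀b hdm hdmc₀ ⟨_, hh1, hm1, hc1, hl1⟩ ⟨hne2, hh2, hm2, hc2, hl2⟩
    obtain ⟨q', t', rfl⟩ := List.exists_cons_of_ne_nil hne2
    have hq1 : q.1 = c₀ := by simpa using hh1
    have hq'1 : q'.1 = c₀ := by simpa using hh2
    have hmq := hm1 q List.mem_cons_self
    have hmq' := hm2 q' List.mem_cons_self
    rw [hq1] at hmq
    rw [hq'1] at hmq'
    have hdne : q.2 ≠ dm := fun he => D.not_both q.2 c₀ ⟨hmq.2.1, he ▸ hdmc₀⟩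
    have hdne' : q'.2 ≠ dm := fun he => D.not_both q'.2 c₀ ⟨hmq'.2.1, he ▸ hdmc₀⟩
    obtain ⟨d₀, _, hu⟩ := nextD D hdm hdmc₀
    have hq2 : q.2 = q'.2 := by
      rw [hu q.2 ⟨hdne, hmq.2.2, hmq.2.1⟩, hu q'.2 ⟨hdne', hmq'.2.2, hmq'.2.1⟩]
    have hqq' : q = q' := Prod.ext (hq1.trans hq'1.symm) hq2
    cases t with
    | nil =>
      obtain ⟨w, hw, hwt⟩ := hl1
      simp only [List.getLast?_singleton, Option.some.injEq] at hw
      subst hw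
      cases t' with
      | nil => rw [hqq']
      | cons r' t2 =>
        exfalso
        have hchain : D.precP q'.2 r'.1 := (List.isChain_cons_cons.mp hc2).1
        have hr'b : D.precN r'.1 b := (hm2 r' (by simp)).1
        exact nextC_excl D hmq.2.1 hc₀b hwt (hq2 ▸ hchain) hr'b
    | cons r t2 =>
      cases t' with
      | nil =>
        exfalso
        obtain ⟨w, hw, hwt⟩ := hl2
        simp only [List.getLast?_singleton, Option.some.injEq] at hw
        subst hw
        have hchain : D.precP q.2 r.1 := (List.isChain_cons_cons.mp hc1).1
        have hrb : D.precN r.1 b := (hm1 r (by simp)).1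
        exact nextC_excl D hmq'.2.1 hc₀b hwt (hq2.symm ▸ hchain) hrb
      | cons r' t3 =>
        have hchain : D.precP q.2 r.1 := (List.isChain_cons_cons.mp hc1).1
        have hchain' : D.precP q'.2 r'.1 := (List.isChain_cons_cons.mp hc2).1
        have hrb : D.precN r.1 b := (hm1 r (by simp)).1
        have hr'b : D.precN r'.1 b := (hm2 r' (by simp)).1
        have hr1 : r.1 = r'.1 :=
          nextC_unique D hmq.2.1 hc₀b hchain hrb (hq2 ▸ hchain') hr'b
        have hβq : sprec D.precN D.precP β e q.2 := hmq.2.2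
        have htails : r :: t2 = r' :: t3 := by
          refine ih (r' :: t3) r.1 q.2 hrb hβq hchain ?_ ?_
          · exact ⟨by simp, by simp, fun x hx => hm1 x (List.mem_cons_of_mem _ hx),
              (List.isChain_cons_cons.mp hc1).2, by
                obtain ⟨w, hw, hwt⟩ := hl1
                exact ⟨w, by rw [← List.getLast?_cons_cons (l := t2) (a := q)]; exact hw, hwt⟩⟩
          · exact ⟨by simp, by simp [hr1], fun x hx => hm2 x (List.mem_cons_of_mem _ hx),
              (List.isChain_cons_cons.mp hc2).2, by
                obtain ⟨w, hw, hwt⟩ := hl2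
                exact ⟨w, by rw [← List.getLast?_cons_cons (l := t3) (a := q')]; exact hw, hwt⟩⟩
        rw [hqq', htails]

end DFCProof

/-- positive parenthesis completion: given `e ≺^β d ≺⁺ c ≺⁻ b`,
there is a unique chain `c = c₀ ≻⁻ d₀ ≺⁺ c₁ ≻⁻ d₁ ≺⁺ ⋯ ≺⁺ c_p ≻⁻ d_p ≺⁻ γ(b)`
(`p ≥ 0`) with all `cᵢ ≺⁻ b` and all `e ≺^β dᵢ`; encoded as the unique nonempty
list of pairs `(cᵢ, dᵢ)`. -/
theorem dfc_positive_parenthesis {α : Type*} [Fintype α] (D : DFC α) (β : Bool)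
    (e d c b : α) (h1 : sprec D.precN D.precP β e d) (h2 : D.precP d c)
    (h3 : D.precN c b) :
    ∃! l : List (α × α), l ≠ [] ∧ l.head?.map Prod.fst = some c ∧
      (∀ q ∈ l, D.precN q.1 b ∧ D.precN q.2 q.1 ∧ sprec D.precN D.precP β e q.2) ∧
      l.Chain' (fun q r => D.precP q.2 r.1) ∧
      (∃ q, l.getLast? = some q ∧ D.precN q.2 (D.tgt b)) := by
  obtain ⟨l, hl⟩ := DFCProof.good_exists D β e b c h3 d h1 h2
  exact ⟨l, hl, fun l' hl' => DFCProof.good_unique D β e b l' l c d h3 h1 h2 hl' hl⟩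
end

section
/- Negative parenthesis completion: let C be a dendritic face complex, let β ∈ {+,−}, and suppose e ≺^β d ≺⁻ c ≺⁻ b in C. Then there exist unique p ≥ 0 and faces c = c₀, c₁, …, c_p, c_{p+1} = γ(b) and d = d₀, d₁, …, d_p such that: c_i ≺⁻ b for all 0 ≤ i ≤ p; d_i ≺⁻ c_i for all 0 ≤ i ≤ p; d_i ≺⁺ c_{i+1} for all 0 ≤ i ≤ p−1; d_p ≺⁻ c_{p+1} = γ(b); and e ≺^β d_i for all 0 ≤ i ≤ p. -/
namespace DFCAux

variable {α : Type*} [Fintype α]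

/-- From `d ≺⁻ c ≺⁻ b`, thinness yields a unique `y'` that is either `γ(b)` with
`d ≺⁻ y'`, or a source of `b` with `d ≺⁺ y'`. -/
lemma stepC (D : DFC α) {b c d : α} (hdc : D.precN d c) (hcb : D.precN c b) :
    ∃! y', (y' = D.tgt b ∧ D.precN d y') ∨ (D.precN y' b ∧ D.precP d y') := by
  have hdim : 1 ≤ D.dim b := by have := D.dim_precN hcb; omega
  have htb := D.tgt_precP b hdim
  obtain ⟨y', ⟨hne, a', b', hzy, hyx, hsign⟩, huniq⟩ :=
    D.thin false false b c d hdc hcb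
  have key : ∀ z, ((z = D.tgt b ∧ D.precN d z) ∨ (D.precN z b ∧ D.precP d z)) → z = y' := by
    rintro z (⟨hz1, hz2⟩ | ⟨hz1, hz2⟩)
    · apply huniq
      refine ⟨fun h => D.not_both c b ⟨hcb, ?_⟩, true, false, hz2,
        (by rw [hz1]; exact htb), by simp⟩
      rw [← h, hz1]; exact htb
    · apply huniq
      refine ⟨fun h => D.not_both d c ⟨hdc, h ▸ hz2⟩, false, true, hz2, hz1, by simp⟩
  have hy'disj : (y' = D.tgt b ∧ D.precN d y') ∨ (D.precN y' b ∧ D.precP d y') := by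
    have hsign' : ¬ (a' = b') := hsign.mp rfl
    cases a' with
    | true =>
      cases b' with
      | true => exact absurd rfl hsign'
      | false => exact Or.inl ⟨D.precP_unique hyx, hzy⟩
    | false =>
      cases b' with
      | true => exact Or.inr ⟨hyx, hzy⟩
      | false => exact absurd rfl hsign'
  exact ⟨y', hy'disj, key⟩

/-- From `e ≺^β d ≺⁺ c'`, thinness yields a unique source `d'` of `c'` with
`e ≺^β d'`. -/
lemma stepD (D : DFC α) {β : Bool} {e d c' : α} (hed : sprec D.precN D.precP β e d)
    (hdc' : D.precP d c') :
    ∃! d', D.precN d' c' ∧ sprec D.precN D.precP β e d' := by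
  obtain ⟨y', ⟨hne, a', b', hzy, hyx, hsign⟩, huniq⟩ := D.thin true β c' d e hed hdc'
  have key : ∀ z, D.precN z c' ∧ sprec D.precN D.precP β e z → z = y' := by
    rintro z ⟨hz1, hz2⟩
    apply huniq
    refine ⟨fun h => D.not_both z c' ⟨hz1, by rw [h]; exact hdc'⟩, false, β, hz2, hz1, ?_⟩
    cases β <;> decide
  refine ⟨y', ?_, key⟩
  cases a' with
  | true =>
    exact absurd ((D.precP_unique hyx).trans (D.precP_unique hdc').symm) hne
  | false =>
    have hb' : b' = β := by
      revert hsign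
      cases β <;> cases b' <;> intro hsign <;>
        first
          | rfl
          | exact absurd hsign (by decide)
    subst hb'
    exact ⟨hyx, hzy⟩

/-- The auxiliary relation along paths in `δ(b)`: `Rel D b a c` iff `a, c ≺⁻ b`
and `γ(a) ≺⁻ c`. -/
def Rel (D : DFC α) (b : α) (a c : α) : Prop :=
  D.precN a b ∧ D.precN c b ∧ D.precN (D.tgt a) c

lemma rtg_seq {r : α → α → Prop} {x z : α} (h : Relation.ReflTransGen r x z) :
    ∃ p, ∃ u : ℕ → α, u 0 = x ∧ u p = z ∧ ∀ i < p, r (u i) (u (i + 1)) := by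
  induction h with
  | refl => exact ⟨0, fun _ => x, rfl, rfl, fun i hi => absurd hi (by omega)⟩
  | @tail bb cc hab hbc ih =>
    obtain ⟨p, u, h0, hp, hstep⟩ := ih
    refine ⟨p + 1, fun i => if i = p + 1 then cc else u i, ?_, ?_, ?_⟩
    · simp only [if_neg (by omega : ¬ (0 : ℕ) = p + 1)]; exact h0
    · simp
    · intro i hi
      rcases Nat.lt_succ_iff_lt_or_eq.mp hi with h' | h'
      · simp only [if_neg (by omega : ¬ i = p + 1), if_neg (by omega : ¬ i + 1 = p + 1)]
        exact hstep i h'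
      · subst h'
        simp only [if_neg (by omega : ¬ i = i + 1), if_pos rfl]
        rw [hp]
        exact hbc

lemma wf_Rel (D : DFC α) (b : α) : WellFounded (Rel D b) := by
  have hirr : ∀ c, ¬ Relation.TransGen (Rel D b) c c := by
    intro c hc
    obtain ⟨m, hcm, hmc⟩ := (Relation.TransGen.tail'_iff).mp hc
    obtain ⟨p, u, h0, hp, hstep⟩ := rtg_seq hcm
    set u' : ℕ → α := fun i => if i = p + 1 then c else u i with hu'
    have hstep' : ∀ i < p + 1, Rel D b (u' i) (u' (i + 1)) := by
      intro i hi
      rcases Nat.lt_succ_iff_lt_or_eq.mp hi with h' | h'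
      · simp only [hu', if_neg (by omega : ¬ i = p + 1), if_neg (by omega : ¬ i + 1 = p + 1)]
        exact hstep i h'
      · subst h'
        simp only [hu', if_neg (by omega : ¬ i = i + 1), if_pos rfl]
        rw [hp]
        exact hmc
    have hub : ∀ j, 1 ≤ j → j ≤ p + 1 → D.precN (u' j) b := by
      intro j h1 h2
      have h := hstep' (j - 1) (by omega)
      rw [(by omega : j - 1 + 1 = j)] at h
      exact h.2.1
    refine D.no_cycle b (p + 1) (by omega) (fun i => u' (p + 2 - i)) ?_ ?_ ?_
    · intro i h1 h2
      exact hub (p + 2 - i) (by omega) (by omega)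
    · show u' (p + 2 - (p + 1 + 1)) = u' (p + 2 - 1)
      rw [(by omega : p + 2 - (p + 1 + 1) = 0), (by omega : p + 2 - 1 = p + 1)]
      simp only [hu', if_neg (by omega : ¬ (0 : ℕ) = p + 1), if_pos rfl]
      exact h0
    · intro i h1 h2
      show D.precN (D.tgt (u' (p + 2 - (i + 1)))) (u' (p + 2 - i))
      rw [(by omega : p + 2 - (i + 1) = p + 1 - i),
        (by omega : p + 2 - i = (p + 1 - i) + 1)]
      exact (hstep' (p + 1 - i) (by omega)).2.2
  haveI : IsTrans α (Relation.TransGen (Rel D b)) := inferInstance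
  haveI : IsIrrefl α (Relation.TransGen (Rel D b)) := ⟨hirr⟩
  exact Subrelation.wf (fun h => Relation.TransGen.single h)
    (Finite.wellFounded_of_trans_of_irrefl _)

/-- The predicate of the main theorem, parameterized by the starting pair. -/
def Pst (D : DFC α) (β : Bool) (b e c d : α) (l : List (α × α)) : Prop :=
  l ≠ [] ∧ l.head? = some (c, d) ∧
    (∀ q ∈ l, D.precN q.1 b ∧ D.precN q.2 q.1 ∧ sprec D.precN D.precP β e q.2) ∧
    l.Chain' (fun q r => D.precP q.2 r.1) ∧
    (∃ q, l.getLast? = some q ∧ D.precN q.2 (D.tgt b))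

lemma Pst_tail (D : DFC α) (β : Bool) (b e : α) {c d : α} {q : α × α} {t : List (α × α)}
    (h : Pst D β b e c d ((c, d) :: q :: t)) : Pst D β b e q.1 q.2 (q :: t) := by
  obtain ⟨-, -, hmem, hchain, hlast⟩ := h
  refine ⟨List.cons_ne_nil _ _, by simp, fun r hr => hmem r (List.mem_cons_of_mem _ hr),
    hchain.tail, ?_⟩
  obtain ⟨z, hz, hzt⟩ := hlast
  exact ⟨z, by rwa [List.getLast?_cons_cons] at hz, hzt⟩

lemma ex_aux (D : DFC α) (β : Bool) (b e : α) :
    ∀ c : α, Acc (Rel D b) c → ∀ d : α, D.precN d c → D.precN c b →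
      sprec D.precN D.precP β e d → ∃ l, Pst D β b e c d l := by
  intro c hacc
  induction hacc with
  | intro c _ ih =>
    intro d hdc hcb hed
    obtain ⟨y', hy', -⟩ := stepC D hdc hcb
    rcases hy' with ⟨hyt, hdy⟩ | ⟨hyb, hdy⟩
    · refine ⟨[(c, d)], List.cons_ne_nil _ _, rfl, ?_, List.isChain_singleton _,
        ⟨(c, d), rfl, ?_⟩⟩
      · intro q hq
        simp only [List.mem_singleton] at hq
        subst hq
        exact ⟨hcb, hdc, hed⟩
      · show D.precN d (D.tgt b)
        rw [← hyt]; exact hdy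
    · obtain ⟨d', ⟨hd'y, hed'⟩, -⟩ := stepD D hed hdy
      have hrel : Rel D b y' c := ⟨hyb, hcb, by rw [← D.precP_unique hdy]; exact hdc⟩
      obtain ⟨l', hl'⟩ := ih y' hrel d' hd'y hyb hed'
      obtain ⟨hne, hhead, hmem, hchain, hlast⟩ := hl'
      obtain ⟨z, w, rfl⟩ := List.exists_cons_of_ne_nil hne
      have hz : z = (y', d') := by simpa using hhead
      refine ⟨(c, d) :: z :: w, List.cons_ne_nil _ _, rfl, ?_, ?_, ?_⟩
      · intro q hq
        rcases List.mem_cons.mp hq with rfl | hq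
        · exact ⟨hcb, hdc, hed⟩
        · exact hmem q hq
      · exact List.IsChain.cons_cons (show D.precP d z.1 by rw [hz]; exact hdy) hchain
      · obtain ⟨r, hr, hrt⟩ := hlast
        exact ⟨r, by rwa [List.getLast?_cons_cons], hrt⟩

lemma uniq_aux (D : DFC α) (β : Bool) (b e : α) :
    ∀ (l : List (α × α)) (c d : α) (m : List (α × α)),
      Pst D β b e c d l → Pst D β b e c d m → l = m := by
  intro l
  induction l with
  | nil => exact fun c d m hl _ => absurd rfl hl.1
  | cons q0 t ih =>
    intro c d m hl hm
    obtain ⟨-, hhead, hmem, hchain, hlast⟩ := hl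
    have hq0 : q0 = (c, d) := by simpa using hhead
    subst hq0
    obtain ⟨hmne, hmhead, hmmem, hmchain, hmlast⟩ := hm
    obtain ⟨q0', s, rfl⟩ := List.exists_cons_of_ne_nil hmne
    have hq0' : q0' = (c, d) := by simpa using hmhead
    subst hq0'
    have hcb : D.precN c b := (hmem (c, d) List.mem_cons_self).1
    have hdc : D.precN d c := (hmem (c, d) List.mem_cons_self).2.1
    have hed := (hmem (c, d) List.mem_cons_self).2.2
    have hdim : 1 ≤ D.dim b := by have := D.dim_precN hcb; omega
    obtain ⟨y', -, huniq⟩ := stepC D hdc hcb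
    cases t with
    | nil =>
      cases s with
      | nil => rfl
      | cons q s' =>
        exfalso
        obtain ⟨z, hz, hzt⟩ := hlast
        have hz' : (c, d) = z := by simpa using hz
        subst hz'
        have h1 : D.tgt b = y' := huniq _ (Or.inl ⟨rfl, hzt⟩)
        have hqb : D.precN q.1 b := (hmmem q (by simp)).1
        have hdq : D.precP d q.1 := (List.isChain_cons_cons.mp hmchain).1
        have h2 : q.1 = y' := huniq _ (Or.inr ⟨hqb, hdq⟩)
        exact D.not_both q.1 b ⟨hqb, by rw [h2, ← h1]; exact D.tgt_precP b hdim⟩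
    | cons q t' =>
      cases s with
      | nil =>
        exfalso
        obtain ⟨z, hz, hzt⟩ := hmlast
        have hz' : (c, d) = z := by simpa using hz
        subst hz'
        have h1 : D.tgt b = y' := huniq _ (Or.inl ⟨rfl, hzt⟩)
        have hqb : D.precN q.1 b := (hmem q (by simp)).1
        have hdq : D.precP d q.1 := (List.isChain_cons_cons.mp hchain).1
        have h2 : q.1 = y' := huniq _ (Or.inr ⟨hqb, hdq⟩)
        exact D.not_both q.1 b ⟨hqb, by rw [h2, ← h1]; exact D.tgt_precP b hdim⟩
      | cons q' s' =>
        have hqb : D.precN q.1 b := (hmem q (by simp)).1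
        have hdq : D.precP d q.1 := (List.isChain_cons_cons.mp hchain).1
        have hq'b : D.precN q'.1 b := (hmmem q' (by simp)).1
        have hdq' : D.precP d q'.1 := (List.isChain_cons_cons.mp hmchain).1
        have h1 : q.1 = y' := huniq _ (Or.inr ⟨hqb, hdq⟩)
        have h2 : q'.1 = y' := huniq _ (Or.inr ⟨hq'b, hdq'⟩)
        have hq1 : q.1 = q'.1 := h1.trans h2.symm
        obtain ⟨dd, -, hduniq⟩ := stepD D hed hdq
        have hd1 : q.2 = dd := hduniq _ ⟨(hmem q (by simp)).2.1, (hmem q (by simp)).2.2⟩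
        have hd2 : q'.2 = dd := hduniq _
          ⟨by rw [hq1]; exact (hmmem q' (by simp)).2.1, (hmmem q' (by simp)).2.2⟩
        have hqq : q = q' := Prod.ext hq1 (hd1.trans hd2.symm)
        have htail1 : Pst D β b e q.1 q.2 (q :: t') :=
          Pst_tail D β b e ⟨List.cons_ne_nil _ _, rfl, hmem, hchain, hlast⟩
        have htail2 : Pst D β b e q.1 q.2 (q' :: s') := by
          rw [hqq]
          exact Pst_tail D β b e ⟨List.cons_ne_nil _ _, rfl, hmmem, hmchain, hmlast⟩
        have h := ih q.1 q.2 (q' :: s') htail1 htail2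
        rw [h]

end DFCAux

/-- negative parenthesis completion: given `e ≺^β d ≺⁻ c ≺⁻ b`,
there is a unique chain `c = c₀ ≻⁻ d = d₀ ≺⁺ c₁ ≻⁻ d₁ ≺⁺ ⋯ ≺⁺ c_p ≻⁻ d_p ≺⁻ γ(b)`
(`p ≥ 0`) with all `cᵢ ≺⁻ b` and all `e ≺^β dᵢ`; encoded as the unique nonempty
list of pairs `(cᵢ, dᵢ)` starting at `(c, d)`. -/
theorem dfc_negative_parenthesis {α : Type*} [Fintype α] (D : DFC α) (β : Bool)
    (e d c b : α) (h1 : sprec D.precN D.precP β e d) (h2 : D.precN d c)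
    (h3 : D.precN c b) :
    ∃! l : List (α × α), l ≠ [] ∧ l.head? = some (c, d) ∧
      (∀ q ∈ l, D.precN q.1 b ∧ D.precN q.2 q.1 ∧ sprec D.precN D.precP β e q.2) ∧
      l.Chain' (fun q r => D.precP q.2 r.1) ∧
      (∃ q, l.getLast? = some q ∧ D.precN q.2 (D.tgt b)) := by
  obtain ⟨l, hl⟩ := DFCAux.ex_aux D β b e c ((DFCAux.wf_Rel D b).apply c) d h2 h3 h1
  exact ⟨l, hl, fun m hm => DFCAux.uniq_aux D β b e m c d l hm hl⟩
end

section
/- Signed hexagon property: let C be a dendritic face complex, let α, α', β ∈ {+,−}, and suppose c ≺⁻ b, c' ≺⁻ b, d ≺^α c, d' ≺^{α'} c', e ≺^β d and e ≺^β d' (the same sign β on both lower legs). Then, possibly after exchanging the pair (c, d) with (c', d'), there exist p ≥ 0, faces c = c₀, c₁, …, c_p = c' with c_i ≺⁻ b for all i, and faces d₀, …, d_{p−1} such that d_i ≺⁻ c_i, d_i ≺⁺ c_{i+1}, and e ≺^β d_i for all 0 ≤ i ≤ p−1. -/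
section HexAux

variable {α : Type*} [Fintype α]

/-- Two signs relating the same pair of faces agree. -/
lemma dfc_sign_unique (D : DFC α) {a a' : Bool} {y x : α}
    (h : sprec D.precN D.precP a y x) (h' : sprec D.precN D.precP a' y x) : a = a' := by
  cases a <;> cases a'
  · rfl
  · exact absurd ⟨h, h'⟩ (D.not_both y x)
  · exact absurd ⟨h', h⟩ (D.not_both y x)
  · rfl

/-- In a chain `z ≺ y ≺ X`, the middle face is determined by the product of the two signs. -/
lemma dfc_same_val (D : DFC α) {X z y₁ y₂ : α} {a₁ c₁ a₂ c₂ : Bool}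
    (h₁ : sprec D.precN D.precP c₁ z y₁) (h₂ : sprec D.precN D.precP a₁ y₁ X)
    (h₃ : sprec D.precN D.precP c₂ z y₂) (h₄ : sprec D.precN D.precP a₂ y₂ X)
    (hv : (a₁ = c₁) ↔ (a₂ = c₂)) : y₁ = y₂ := by
  obtain ⟨y₃, ⟨hne₃, a₃, c₃, h₅, h₆, hs⟩, -⟩ := D.thin a₁ c₁ X y₁ z h₁ h₂
  obtain ⟨w, -, hw⟩ := D.thin a₃ c₃ X y₃ z h₅ h₆
  have e₁ : y₁ = w := hw y₁ ⟨Ne.symm hne₃, a₁, c₁, h₁, h₂, by tauto⟩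
  have e₂ : y₂ = w := by
    refine hw y₂ ⟨?_, a₂, c₂, h₃, h₄, by tauto⟩
    intro h; subst h
    have hcc : c₂ = c₃ := dfc_sign_unique D h₃ h₅
    have haa : a₂ = a₃ := dfc_sign_unique D h₄ h₆
    rw [haa, hcc] at hv
    tauto
  exact e₁.trans e₂.symm

/-- The invariant of the walk: a facet of `b` together with a negative face of it
containing `e` with sign `sb`. -/
def dInv (D : DFC α) (sb : Bool) (b e : α) (s : α × α) : Prop :=
  D.precN s.1 b ∧ D.precN s.2 s.1 ∧ sprec D.precN D.precP sb e s.2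

/-- The exit condition: the second coface of the current edge is the target facet. -/
def dExit (D : DFC α) (b : α) (s : α × α) : Prop :=
  ∃ xe, D.precP xe b ∧ D.precN s.2 xe

/-- One step of the walk. -/
def dStep (D : DFC α) (sb : Bool) (b e : α) (s s' : α × α) : Prop :=
  D.precN s'.1 b ∧ D.precP s.2 s'.1 ∧ D.precN s'.2 s'.1 ∧ sprec D.precN D.precP sb e s'.2

lemma dfc_step_or_exit (D : DFC α) (sb : Bool) (b e : α) {s : α × α}
    (h : dInv D sb b e s) : dExit D b s ∨ ∃ s', dStep D sb b e s s' := by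
  obtain ⟨hxb, hyx, hey⟩ := h
  obtain ⟨x₁, ⟨hne, a₁, c₁, hyx₁, hx₁b, hs⟩, -⟩ := D.thin false false b s.1 s.2 hyx hxb
  have hac : ¬ (a₁ = c₁) := hs.mp rfl
  cases a₁ with
  | true =>
    left
    have hc₁ : c₁ = false := by cases c₁ <;> tauto
    subst hc₁
    exact ⟨x₁, hx₁b, hyx₁⟩
  | false =>
    have hc₁ : c₁ = true := by cases c₁ <;> tauto
    subst hc₁
    obtain ⟨y₂, ⟨hne₂, a₂, c₂, h₅, h₆, hs₂⟩, -⟩ := D.thin true sb x₁ s.2 e hey hyx₁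
    have ha₂ : a₂ = false := by
      cases a₂ with
      | false => rfl
      | true => exact absurd ((D.precP_unique h₆).trans (D.precP_unique hyx₁).symm) hne₂
    subst ha₂
    have hc₂ : c₂ = sb := by
      cases sb <;> cases c₂ <;> first | rfl | simp at hs₂
    subst hc₂
    exact Or.inr ⟨(x₁, y₂), hx₁b, hyx₁, h₆, h₅⟩

/-- From any leg `dd ≺^sa x` with `e ≺^sb dd` we get a negative leg with the same
bottom sign. -/
lemma dfc_outedge (D : DFC α) (sb : Bool) {x dd e : α} {sa : Bool}
    (h1 : sprec D.precN D.precP sa dd x) (h2 : sprec D.precN D.precP sb e dd) :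
    ∃ y, D.precN y x ∧ sprec D.precN D.precP sb e y := by
  cases sa with
  | false => exact ⟨dd, h1, h2⟩
  | true =>
    obtain ⟨y₃, ⟨hne₃, a₃, c₃, h₅, h₆, hs⟩, -⟩ := D.thin true sb x dd e h2 h1
    have ha₃ : a₃ = false := by
      cases a₃ with
      | false => rfl
      | true => exact absurd ((D.precP_unique h₆).trans (D.precP_unique h1).symm) hne₃
    subst ha₃
    have hc₃ : c₃ = sb := by
      cases sb <;> cases c₃ <;> first | rfl | simp at hs
    subst hc₃
    exact ⟨y₃, h₆, h₅⟩

open Classical in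
/-- The walk function (identity on exit / junk states). -/
noncomputable def dfcWalkNext (D : DFC α) (sb : Bool) (b e : α) (s : α × α) : α × α :=
  if h : dInv D sb b e s ∧ ¬ dExit D b s then
    Classical.choose ((dfc_step_or_exit D sb b e h.1).resolve_left h.2)
  else s

lemma dfcWalkNext_spec (D : DFC α) (sb : Bool) (b e : α) {s : α × α}
    (h1 : dInv D sb b e s) (h2 : ¬ dExit D b s) :
    dStep D sb b e s (dfcWalkNext D sb b e s) := by
  classical
  rw [dfcWalkNext]
  rw [dif_pos (⟨h1, h2⟩ : dInv D sb b e s ∧ ¬ dExit D b s)]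
  exact Classical.choose_spec _

lemma dStep_inv {D : DFC α} {sb : Bool} {b e : α} {s s' : α × α}
    (h : dStep D sb b e s s') : dInv D sb b e s' :=
  ⟨h.1, h.2.2.1, h.2.2.2⟩

lemma dfcWalkNext_inv (D : DFC α) (sb : Bool) (b e : α) {s : α × α} (h : dInv D sb b e s) :
    dInv D sb b e (dfcWalkNext D sb b e s) := by
  by_cases h2 : dExit D b s
  · classical rw [dfcWalkNext, dif_neg (by tauto)]; exact h
  · exact dStep_inv (dfcWalkNext_spec D sb b e h h2)

lemma dfc_orbit_inv (D : DFC α) (sb : Bool) (b e : α) {s : α × α} (h : dInv D sb b e s) :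
    ∀ n, dInv D sb b e ((dfcWalkNext D sb b e)^[n] s) := by
  intro n
  induction n with
  | zero => simpa using h
  | succ n ih => rw [Function.iterate_succ_apply']; exact dfcWalkNext_inv D sb b e ih

/-- The walk always reaches an exit state (else `no_cycle` at `b` is violated). -/
lemma dfc_orbit_exit (D : DFC α) (sb : Bool) (b e : α) {s : α × α} (h : dInv D sb b e s) :
    ∃ n, dExit D b ((dfcWalkNext D sb b e)^[n] s) := by
  by_contra hno
  push_neg at hno
  have hstep : ∀ n, dStep D sb b e ((dfcWalkNext D sb b e)^[n] s) ((dfcWalkNext D sb b e)^[n + 1] s) := by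
    intro n
    rw [Function.iterate_succ_apply']
    exact dfcWalkNext_spec D sb b e (dfc_orbit_inv D sb b e h n) (hno n)
  have key : ∀ i j, i < j → (dfcWalkNext D sb b e)^[i] s = (dfcWalkNext D sb b e)^[j] s → False := by
    intro i j hij heq
    refine D.no_cycle b (j - i) (by omega) (fun k => (((dfcWalkNext D sb b e)^[i + k - 1]) s).1)
      (fun k hk1 hk2 => (dfc_orbit_inv D sb b e h _).1) ?_ ?_
    · have h1 : i + (j - i + 1) - 1 = j := by omega
      have h2 : i + 1 - 1 = i := by omega
      beta_reduce
      rw [h1, h2, heq]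
    · intro k hk1 hk2
      have hm : i + (k + 1) - 1 = (i + k - 1) + 1 := by omega
      beta_reduce
      rw [hm]
      have hst := hstep (i + k - 1)
      have htg := D.precP_unique hst.2.1
      rw [← htg]
      exact (dfc_orbit_inv D sb b e h _).2.1
  obtain ⟨i, j, hne, heq⟩ :=
    Finite.exists_ne_map_eq_of_infinite (fun n => (dfcWalkNext D sb b e)^[n] s)
  rcases hne.lt_or_gt with hlt | hlt
  · exact key i j hlt heq
  · exact key j i hlt heq.symm

/-- Main auxiliary lemma: any two walk states are joined by a lower path. -/
lemma dfc_main_aux (D : DFC α) (sb : Bool) (b e : α) {s t : α × α}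
    (hs : dInv D sb b e s) (ht : dInv D sb b e t) :
    D.lowerPath sb b e s.1 t.1 ∨ D.lowerPath sb b e t.1 s.1 := by
  classical
  have hes := dfc_orbit_exit D sb b e hs
  have het := dfc_orbit_exit D sb b e ht
  set N := Nat.find hes with hNdef
  set M := Nat.find het with hMdef
  have hNex : dExit D b ((dfcWalkNext D sb b e)^[N] s) := Nat.find_spec hes
  have hMex : dExit D b ((dfcWalkNext D sb b e)^[M] t) := Nat.find_spec het
  have hNmin : ∀ k, k < N → ¬ dExit D b ((dfcWalkNext D sb b e)^[k] s) := by
    intro k hk; exact Nat.find_min hes hk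
  have hMmin : ∀ k, k < M → ¬ dExit D b ((dfcWalkNext D sb b e)^[k] t) := by
    intro k hk; exact Nat.find_min het hk
  have exiteq : (dfcWalkNext D sb b e)^[N] s = (dfcWalkNext D sb b e)^[M] t := by
    obtain ⟨xe, hxe, hyxe⟩ := hNex
    obtain ⟨xe', hxe', hyxe'⟩ := hMex
    have hxx : xe' = xe := (D.precP_unique hxe').trans (D.precP_unique hxe).symm
    rw [hxx] at hyxe'
    have hiN := dfc_orbit_inv D sb b e hs N
    have hiM := dfc_orbit_inv D sb b e ht M
    have hy : ((dfcWalkNext D sb b e)^[N] s).2 = ((dfcWalkNext D sb b e)^[M] t).2 :=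
      dfc_same_val D (X := xe) (a₁ := false) (c₁ := sb) (a₂ := false) (c₂ := sb)
        hiN.2.2 hyxe hiM.2.2 hyxe' Iff.rfl
    have hx : ((dfcWalkNext D sb b e)^[N] s).1 = ((dfcWalkNext D sb b e)^[M] t).1 := by
      refine dfc_same_val D (X := b) (z := ((dfcWalkNext D sb b e)^[N] s).2)
        (a₁ := false) (c₁ := false) (a₂ := false) (c₂ := false)
        hiN.2.1 hiN.1 ?_ hiM.1 Iff.rfl
      rw [hy]; exact hiM.2.1
    exact Prod.ext_iff.mpr ⟨hx, hy⟩
  have inj : ∀ u v u' : α × α, dInv D sb b e u → dInv D sb b e v →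
      dStep D sb b e u u' → dStep D sb b e v u' → u = v := by
    intro u v u' hu hv h1 h2
    have hy : u.2 = v.2 := (D.precP_unique h1.2.1).trans (D.precP_unique h2.2.1).symm
    have hx : u.1 = v.1 := by
      refine dfc_same_val D (X := b) (z := u.2)
        (a₁ := false) (c₁ := false) (a₂ := false) (c₂ := false)
        hu.2.1 hu.1 ?_ hv.1 Iff.rfl
      rw [hy]; exact hv.2.1
    exact Prod.ext_iff.mpr ⟨hx, hy⟩
  rcases le_total M N with hMN | hNM
  · have key : ∀ k, k ≤ M → (dfcWalkNext D sb b e)^[M - k] t = (dfcWalkNext D sb b e)^[N - k] s := by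
      intro k
      induction k with
      | zero => intro _; simpa using exiteq.symm
      | succ k ih =>
        intro hk
        have e₀ := ih (by omega)
        have hM1 : M - k = (M - (k + 1)) + 1 := by omega
        have hN1 : N - k = (N - (k + 1)) + 1 := by omega
        rw [hM1, hN1, Function.iterate_succ_apply', Function.iterate_succ_apply'] at e₀
        have ht1 : ¬ dExit D b ((dfcWalkNext D sb b e)^[M - (k + 1)] t) := hMmin _ (by omega)
        have hs1 : ¬ dExit D b ((dfcWalkNext D sb b e)^[N - (k + 1)] s) := hNmin _ (by omega)
        have st1 := dfcWalkNext_spec D sb b e (dfc_orbit_inv D sb b e ht (M - (k + 1))) ht1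
        have st2 := dfcWalkNext_spec D sb b e (dfc_orbit_inv D sb b e hs (N - (k + 1))) hs1
        rw [e₀] at st1
        exact inj _ _ _ (dfc_orbit_inv D sb b e ht _) (dfc_orbit_inv D sb b e hs _) st1 st2
    have hts : t = (dfcWalkNext D sb b e)^[N - M] s := by
      have := key M le_rfl
      simpa using this
    left
    refine ⟨N - M, fun i => (((dfcWalkNext D sb b e)^[i]) s).1,
      fun i => (((dfcWalkNext D sb b e)^[i]) s).2, rfl, ?_, ?_, ?_⟩
    · exact congrArg Prod.fst hts.symm
    · intro i _; exact (dfc_orbit_inv D sb b e hs i).1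
    · intro i hi
      have hact : ¬ dExit D b ((dfcWalkNext D sb b e)^[i] s) := hNmin i (by omega)
      have hst := dfcWalkNext_spec D sb b e (dfc_orbit_inv D sb b e hs i) hact
      rw [← Function.iterate_succ_apply' (dfcWalkNext D sb b e) i s] at hst
      exact ⟨(dfc_orbit_inv D sb b e hs i).2.1, hst.2.1, (dfc_orbit_inv D sb b e hs i).2.2⟩
  · have key : ∀ k, k ≤ N → (dfcWalkNext D sb b e)^[N - k] s = (dfcWalkNext D sb b e)^[M - k] t := by
      intro k
      induction k with
      | zero => intro _; simpa using exiteq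
      | succ k ih =>
        intro hk
        have e₀ := ih (by omega)
        have hN1 : N - k = (N - (k + 1)) + 1 := by omega
        have hM1 : M - k = (M - (k + 1)) + 1 := by omega
        rw [hN1, hM1, Function.iterate_succ_apply', Function.iterate_succ_apply'] at e₀
        have hs1 : ¬ dExit D b ((dfcWalkNext D sb b e)^[N - (k + 1)] s) := hNmin _ (by omega)
        have ht1 : ¬ dExit D b ((dfcWalkNext D sb b e)^[M - (k + 1)] t) := hMmin _ (by omega)
        have st1 := dfcWalkNext_spec D sb b e (dfc_orbit_inv D sb b e hs (N - (k + 1))) hs1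
        have st2 := dfcWalkNext_spec D sb b e (dfc_orbit_inv D sb b e ht (M - (k + 1))) ht1
        rw [e₀] at st1
        exact inj _ _ _ (dfc_orbit_inv D sb b e hs _) (dfc_orbit_inv D sb b e ht _) st1 st2
    have hts : s = (dfcWalkNext D sb b e)^[M - N] t := by
      have := key N le_rfl
      simpa using this
    right
    refine ⟨M - N, fun i => (((dfcWalkNext D sb b e)^[i]) t).1,
      fun i => (((dfcWalkNext D sb b e)^[i]) t).2, rfl, ?_, ?_, ?_⟩
    · exact congrArg Prod.fst hts.symm
    · intro i _; exact (dfc_orbit_inv D sb b e ht i).1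
    · intro i hi
      have hact : ¬ dExit D b ((dfcWalkNext D sb b e)^[i] t) := hMmin i (by omega)
      have hst := dfcWalkNext_spec D sb b e (dfc_orbit_inv D sb b e ht i) hact
      rw [← Function.iterate_succ_apply' (dfcWalkNext D sb b e) i t] at hst
      exact ⟨(dfc_orbit_inv D sb b e ht i).2.1, hst.2.1, (dfc_orbit_inv D sb b e ht i).2.2⟩

end HexAux

/-- signed hexagon property: given a hexagon
`c ≺⁻ b ≻⁻ c'`, `d ≺^α c`, `d' ≺^{α'} c'`, `e ≺^β d`, `e ≺^β d'` with the same sign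
`β` on both lower legs, there is — up to exchanging `(c, d)` and `(c', d')` — a
(maybe trivial) lower path from `c` to `c'` inside `δ(b)`. -/
theorem dfc_signed_hexagon {α : Type*} [Fintype α] (D : DFC α) (sa sa' sb : Bool)
    (b c c' d d' e : α) (hc : D.precN c b) (hc' : D.precN c' b)
    (hd : sprec D.precN D.precP sa d c) (hd' : sprec D.precN D.precP sa' d' c')
    (he : sprec D.precN D.precP sb e d) (he' : sprec D.precN D.precP sb e d') :
    D.lowerPath sb b e c c' ∨ D.lowerPath sb b e c' c := by
  obtain ⟨d₀, hd₀, he₀⟩ := dfc_outedge D sb hd he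
  obtain ⟨d₀', hd₀', he₀'⟩ := dfc_outedge D sb hd' he'
  exact dfc_main_aux D sb b e (s := (c, d₀)) (t := (c', d₀'))
    ⟨hc, hd₀, he₀⟩ ⟨hc', hd₀', he₀'⟩
end
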